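/- arXiv:2009.11334 — 5 statements merged into one kernel-verified Lean document; each statement's English description precedes it below -/
import Mathlib

section
/- Let n ≥ 1 and let u : ℝⁿ → ℂ be smooth with compact support. Then Σ_{i=1}^n Σ_{j=1}^n ∫_{ℝⁿ} |∂_i ∂_j u(x)|² dx = ∫_{ℝⁿ} |Δu(x)|² dx, where Δu = Σ_j ∂_j² u. -/
open MeasureTheory Complex

/-- j-th partial derivative of a complex-valued function on ℝⁿ. -/
noncomputable def pd {n : ℕ} (u : (Fin n → ℝ) → ℂ) (j : Fin n) (x : Fin n → ℝ) : ℂ :=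
  fderiv ℝ u x (Pi.single j 1)

/-- j-th partial derivative of a real-valued function on ℝⁿ. -/
noncomputable def pdR {n : ℕ} (f : (Fin n → ℝ) → ℝ) (j : Fin n) (x : Fin n → ℝ) : ℝ :=
  fderiv ℝ f x (Pi.single j 1)

/-- Laplacian Δu = Σ_j ∂_j² u. -/
noncomputable def lap {n : ℕ} (u : (Fin n → ℝ) → ℂ) (x : Fin n → ℝ) : ℂ :=
  ∑ j : Fin n, pd (pd u j) j x

/-- Divergence of a vector field, div A = Σ_j ∂_j A_j. -/
noncomputable def divg {n : ℕ} (A : (Fin n → ℝ) → (Fin n → ℝ)) (x : Fin n → ℝ) : ℝ :=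
  ∑ j : Fin n, pdR (fun y => A y j) j x

/-- Magnetic Schrödinger operator
`H^A u = −Δu − 2i Σ_j A_j ∂_j u + (|A|² − i div A) u = (−i∇ + A)² u`. -/
noncomputable def magOp {n : ℕ} (A : (Fin n → ℝ) → (Fin n → ℝ)) (u : (Fin n → ℝ) → ℂ)
    (x : Fin n → ℝ) : ℂ :=
  - lap u x - 2 * Complex.I * (∑ j : Fin n, (A x j : ℂ) * pd u j x)
    + (((∑ j : Fin n, (A x j)^2 : ℝ) : ℂ) - Complex.I * ((divg A x : ℝ) : ℂ)) * u x

section helpers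
variable {n : ℕ}

lemma pd_contDiff {u : (Fin n → ℝ) → ℂ} (hu : ContDiff ℝ (⊤ : ℕ∞) u) (j : Fin n) :
    ContDiff ℝ (⊤ : ℕ∞) (pd u j) :=
  (hu.fderiv_right (by simp)).clm_apply contDiff_const

lemma pd_supp {u : (Fin n → ℝ) → ℂ} (huc : HasCompactSupport u) (j : Fin n) :
    HasCompactSupport (pd u j) :=
  (huc.fderiv ℝ).comp_left (g := fun L : (Fin n → ℝ) →L[ℝ] ℂ => L (Pi.single j 1)) rfl

lemma pd_conj {u : (Fin n → ℝ) → ℂ} (hu : ContDiff ℝ (⊤ : ℕ∞) u) (j : Fin n) :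
    pd (fun y => (starRingEnd ℂ) (u y)) j = fun x => (starRingEnd ℂ) (pd u j x) := by
  ext x
  have h : HasFDerivAt (fun y => (starRingEnd ℂ) (u y))
      ((Complex.conjCLE : ℂ →L[ℝ] ℂ).comp (fderiv ℝ u x)) x :=
    (Complex.conjCLE.toContinuousLinearMap.hasFDerivAt).comp x
      (hu.differentiable (by simp) x).hasFDerivAt
  simp [pd, h.fderiv]

lemma pd_comm {u : (Fin n → ℝ) → ℂ} (hu : ContDiff ℝ (⊤ : ℕ∞) u) (i j : Fin n) :
    pd (pd u j) i = pd (pd u i) j := by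
  ext x
  have hd : DifferentiableAt ℝ (fderiv ℝ u) x :=
    (((hu.fderiv_right (m := ((⊤:ℕ∞) : WithTop ℕ∞)) (by simp)).differentiable (by simp))).differentiableAt
  have key : ∀ v : Fin n → ℝ, HasFDerivAt (fun y => fderiv ℝ u y v)
      ((ContinuousLinearMap.apply ℝ ℂ v).comp (fderiv ℝ (fderiv ℝ u) x)) x :=
    fun v => ((ContinuousLinearMap.apply ℝ ℂ v).hasFDerivAt).comp x hd.hasFDerivAt
  have h1 : pd (pd u j) i x
      = fderiv ℝ (fderiv ℝ u) x (Pi.single i 1) (Pi.single j 1) := by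
    show fderiv ℝ (fun y => fderiv ℝ u y (Pi.single j 1)) x (Pi.single i 1) = _
    rw [(key (Pi.single j 1)).fderiv]; rfl
  have h2 : pd (pd u i) j x
      = fderiv ℝ (fderiv ℝ u) x (Pi.single j 1) (Pi.single i 1) := by
    show fderiv ℝ (fun y => fderiv ℝ u y (Pi.single i 1)) x (Pi.single j 1) = _
    rw [(key (Pi.single i 1)).fderiv]; rfl
  rw [h1, h2]
  exact (hu.contDiffAt.isSymmSndFDerivAt (by rw [minSmoothness_of_isRCLikeNormedField]; exact WithTop.coe_le_coe.mpr le_top)) _ _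

lemma integ_mul {f g : (Fin n → ℝ) → ℂ} (hf : Continuous f) (hg : Continuous g)
    (hfc : HasCompactSupport f) :
    Integrable (fun x => f x * g x) :=
  (hf.mul hg).integrable_of_hasCompactSupport hfc.mul_right

lemma ibp {f g : (Fin n → ℝ) → ℂ} (hf : ContDiff ℝ (⊤ : ℕ∞) f) (hg : ContDiff ℝ (⊤ : ℕ∞) g)
    (hfc : HasCompactSupport f) (j : Fin n) :
    ∫ x, f x * pd g j x = - ∫ x, pd f j x * g x :=
  integral_mul_fderiv_eq_neg_fderiv_mul_of_integrable
    (integ_mul (pd_contDiff hf j).continuous hg.continuous (pd_supp hfc j))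
    (integ_mul hf.continuous (pd_contDiff hg j).continuous hfc)
    (integ_mul hf.continuous hg.continuous hfc)
    (fun x _ => hf.differentiable (by simp) x) (fun x _ => hg.differentiable (by simp) x)

lemma mul_conj_norm' (z : ℂ) : z * (starRingEnd ℂ) z = ((‖z‖^2 : ℝ) : ℂ) := by
  rw [Complex.mul_conj]
  norm_cast
  rw [Complex.normSq_eq_norm_sq]

lemma integral_ofReal' {n : ℕ} (f : (Fin n → ℝ) → ℝ) :
    ∫ x, ((f x : ℝ) : ℂ) = ((∫ x, f x : ℝ) : ℂ) :=
  integral_ofReal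

end helpers

theorem statement4 {n : ℕ} (hn : 1 ≤ n) (u : (Fin n → ℝ) → ℂ)
    (hu : ContDiff ℝ (⊤ : ℕ∞) u) (huc : HasCompactSupport u) :
    ∑ i : Fin n, ∑ j : Fin n, (∫ x, ‖pd (pd u j) i x‖^2) = ∫ x, ‖lap u x‖^2 := by
  classical
  set cu : (Fin n → ℝ) → ℂ := fun y => (starRingEnd ℂ) (u y) with hcu_def
  have hcu : ContDiff ℝ (⊤ : ℕ∞) cu :=
    Complex.conjCLE.toContinuousLinearMap.contDiff.comp hu
  have hcuc : HasCompactSupport cu := huc.comp_left (map_zero _)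
  have key : ∀ i j : Fin n,
      (∫ x, pd (pd u j) i x * (starRingEnd ℂ) (pd (pd u j) i x))
        = ∫ x, (starRingEnd ℂ) (pd (pd u i) i x) * pd (pd u j) j x := by
    intro i j
    have e1 : ∀ x, pd (pd cu j) i x = (starRingEnd ℂ) (pd (pd u j) i x) := by
      intro x
      rw [show pd cu j = fun x => (starRingEnd ℂ) (pd u j x) from pd_conj hu j]
      rw [pd_conj (pd_contDiff hu j) i]
    have e2 : ∀ x, pd (pd cu i) i x = (starRingEnd ℂ) (pd (pd u i) i x) := by
      intro x
      rw [show pd cu i = fun x => (starRingEnd ℂ) (pd u i x) from pd_conj hu i]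
      rw [pd_conj (pd_contDiff hu i) i]
    calc (∫ x, pd (pd u j) i x * (starRingEnd ℂ) (pd (pd u j) i x))
        = ∫ x, pd (pd cu j) i x * pd (pd u j) i x := by
          congr 1; funext x; rw [e1 x]; ring
      _ = - ∫ x, pd (pd (pd cu j) i) i x * pd u j x :=
          ibp (pd_contDiff (pd_contDiff hcu j) i) (pd_contDiff hu j)
            (pd_supp (pd_supp hcuc j) i) i
      _ = - ∫ x, pd (pd (pd cu i) i) j x * pd u j x := by
          rw [pd_comm hcu i j, pd_comm (pd_contDiff hcu i) i j]
      _ = ∫ x, pd (pd cu i) i x * pd (pd u j) j x := by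
          rw [ibp (pd_contDiff (pd_contDiff hcu i) i) (pd_contDiff hu j)
            (pd_supp (pd_supp hcuc i) i) j]
      _ = ∫ x, (starRingEnd ℂ) (pd (pd u i) i x) * pd (pd u j) j x := by
          congr 1; funext x; rw [e2 x]
  have hint : ∀ i j : Fin n,
      Integrable (fun x => (starRingEnd ℂ) (pd (pd u i) i x) * pd (pd u j) j x) :=
    fun i j => integ_mul
      (Complex.continuous_conj.comp (pd_contDiff (pd_contDiff hu i) i).continuous)
      (pd_contDiff (pd_contDiff hu j) j).continuous
      ((pd_supp (pd_supp huc i) i).comp_left (map_zero _))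
  have hsum : (∑ i : Fin n, ∑ j : Fin n,
        ∫ x, (starRingEnd ℂ) (pd (pd u i) i x) * pd (pd u j) j x)
      = ∫ x, (starRingEnd ℂ) (lap u x) * lap u x := by
    calc (∑ i : Fin n, ∑ j : Fin n,
          ∫ x, (starRingEnd ℂ) (pd (pd u i) i x) * pd (pd u j) j x)
        = ∑ i : Fin n, ∫ x, ∑ j : Fin n,
            (starRingEnd ℂ) (pd (pd u i) i x) * pd (pd u j) j x :=
          Finset.sum_congr rfl fun i _ =>
            (integral_finset_sum _ fun j _ => hint i j).symm
      _ = ∫ x, ∑ i : Fin n, ∑ j : Fin n,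
            (starRingEnd ℂ) (pd (pd u i) i x) * pd (pd u j) j x :=
          (integral_finset_sum _ fun i _ =>
            integrable_finset_sum _ fun j _ => hint i j).symm
      _ = ∫ x, (starRingEnd ℂ) (lap u x) * lap u x := by
          congr 1; funext x
          rw [lap, map_sum, Finset.sum_mul_sum]
  have main : ((∑ i : Fin n, ∑ j : Fin n, ∫ x, ‖pd (pd u j) i x‖^2 : ℝ) : ℂ)
      = ((∫ x, ‖lap u x‖^2 : ℝ) : ℂ) := by
    rw [Complex.ofReal_sum]
    simp only [Complex.ofReal_sum]
    calc (∑ i : Fin n, ∑ j : Fin n, ((∫ x, ‖pd (pd u j) i x‖^2 : ℝ) : ℂ))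
        = ∑ i : Fin n, ∑ j : Fin n,
            ∫ x, pd (pd u j) i x * (starRingEnd ℂ) (pd (pd u j) i x) := by
          refine Finset.sum_congr rfl fun i _ => Finset.sum_congr rfl fun j _ => ?_
          rw [← integral_ofReal' (fun x => ‖pd (pd u j) i x‖^2)]
          congr 1; funext x; rw [mul_conj_norm']
      _ = ∑ i : Fin n, ∑ j : Fin n,
            ∫ x, (starRingEnd ℂ) (pd (pd u i) i x) * pd (pd u j) j x :=
          Finset.sum_congr rfl fun i _ => Finset.sum_congr rfl fun j _ => key i j
      _ = ∫ x, (starRingEnd ℂ) (lap u x) * lap u x := hsum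
      _ = ∫ x, ((‖lap u x‖^2 : ℝ) : ℂ) := by
          congr 1; funext x; rw [mul_comm, mul_conj_norm']
      _ = ((∫ x, ‖lap u x‖^2 : ℝ) : ℂ) := integral_ofReal' _
  exact_mod_cast main
end

section
/- Let n ≥ 1, let Ω ⊆ ℝⁿ be open, and let A = (A₁,…,Aₙ) : ℝⁿ → ℝⁿ be a C¹ vector field such that A and div A are bounded. Then there exist constants C₁ > 0 and C₂ > 0, depending only on sup|A| and sup|div A|, such that for every u ∈ C_c^∞(Ω;ℂ), ‖Δu‖_{L²(Ω)} ≤ C₁ ‖H^A u‖_{L²(Ω)} + C₂ ‖u‖_{L²(Ω)}. -/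
open MeasureTheory Complex Function
open scoped ENNReal NNReal

section Aux

variable {n : ℕ}

lemma aux_contDiff_pd {u : (Fin n → ℝ) → ℂ} (hu : ContDiff ℝ (⊤:ℕ∞) u) (j : Fin n) :
    ContDiff ℝ (⊤:ℕ∞) (pd u j) :=
  (hu.fderiv_right (m := (⊤:ℕ∞)) (by simp)).clm_apply contDiff_const

lemma aux_support_pd (u : (Fin n → ℝ) → ℂ) (j : Fin n) :
    support (pd u j) ⊆ tsupport u := by
  intro x hx
  apply support_fderiv_subset ℝ (f := u)
  simp only [mem_support, ne_eq] at hx ⊢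
  intro h
  simp [pd, h] at hx

lemma aux_hcs_of_subset {u : (Fin n → ℝ) → ℂ} (hcu : HasCompactSupport u)
    {E : Type*} [NormedAddCommGroup E] {f : (Fin n → ℝ) → E}
    (h : support f ⊆ tsupport u) : HasCompactSupport f :=
  IsCompact.of_isClosed_subset hcu isClosed_closure
    (closure_minimal h (isClosed_tsupport u))

lemma aux_support_subset_of_zero {u : (Fin n → ℝ) → ℂ}
    {E : Type*} [NormedAddCommGroup E] {f : (Fin n → ℝ) → E}
    (h : ∀ x, x ∉ tsupport u → f x = 0) : support f ⊆ tsupport u := by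
  intro x hx
  by_contra hc
  exact hx (h x hc)

lemma aux_pd_zero_off {u : (Fin n → ℝ) → ℂ} (j : Fin n) {x : Fin n → ℝ}
    (hx : x ∉ tsupport u) : pd u j x = 0 := by
  by_contra hc
  exact hx (aux_support_pd u j hc)

lemma aux_tsupport_pd_subset (u : (Fin n → ℝ) → ℂ) (j : Fin n) :
    tsupport (pd u j) ⊆ tsupport u :=
  closure_minimal (aux_support_pd u j) (isClosed_tsupport u)

lemma aux_pd2_zero_off {u : (Fin n → ℝ) → ℂ} (j : Fin n) {x : Fin n → ℝ}
    (hx : x ∉ tsupport u) : pd (pd u j) j x = 0 :=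
  aux_pd_zero_off j (fun h => hx (aux_tsupport_pd_subset u j h))

/-- Integration by parts: `∫ ū ∂j²u = -∫ ‖∂j u‖²`. -/
lemma aux_ibp {u : (Fin n → ℝ) → ℂ} (hu : ContDiff ℝ (⊤:ℕ∞) u)
    (hcu : HasCompactSupport u) (j : Fin n) :
    ∫ x, (starRingEnd ℂ) (u x) * pd (pd u j) j x = -((∫ x, ‖pd u j x‖^2 : ℝ) : ℂ) := by
  classical
  have hpd : ContDiff ℝ (⊤:ℕ∞) (pd u j) := aux_contDiff_pd hu j
  have hpd2c : Continuous (pd (pd u j) j) := (aux_contDiff_pd hpd j).continuous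
  have hcpd : HasCompactSupport (pd u j) := aux_hcs_of_subset hcu (aux_support_pd u j)
  have hcpd2 : HasCompactSupport (pd (pd u j) j) :=
    aux_hcs_of_subset hcu ((aux_support_pd (pd u j) j).trans (aux_tsupport_pd_subset u j))
  set v : Fin n → ℝ := Pi.single j 1 with hv
  set Lc : ℂ →L[ℝ] ℂ := ((RCLike.conjCLE (K := ℂ)).toContinuousLinearMap) with hLc
  have hdu : Differentiable ℝ u := hu.differentiable (by simp)
  have hf : ∀ x, HasFDerivAt (fun y => (starRingEnd ℂ) (u y)) ((Lc.comp (fderiv ℝ u x))) x :=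
    fun x => (Lc.hasFDerivAt.comp x (hdu x).hasFDerivAt)
  have hg : ∀ x, HasFDerivAt (pd u j) (fderiv ℝ (pd u j) x) x :=
    fun x => (hpd.differentiable (by simp) x).hasFDerivAt
  have key := integral_bilinear_hasFDerivAt_right_eq_neg_left_of_integrable
    (μ := (volume : Measure (Fin n → ℝ)))
    (B := ContinuousLinearMap.mul ℝ ℂ) (v := v)
    (f := fun y => (starRingEnd ℂ) (u y)) (g := pd u j)
    (f' := fun x => Lc.comp (fderiv ℝ u x)) (g' := fun x => fderiv ℝ (pd u j) x)
    ?_ ?_ ?_ (fun x _ => hf x) (fun x _ => hg x)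
  · calc ∫ x, (starRingEnd ℂ) (u x) * pd (pd u j) j x
        = ∫ x, (ContinuousLinearMap.mul ℝ ℂ) ((starRingEnd ℂ) (u x)) (fderiv ℝ (pd u j) x v) := rfl
      _ = - ∫ x, (ContinuousLinearMap.mul ℝ ℂ) ((Lc.comp (fderiv ℝ u x)) v) (pd u j x) := key
      _ = - ∫ x, ((‖pd u j x‖^2 : ℝ) : ℂ) := by
          rw [neg_inj]
          congr 1
          funext x
          have h1 : (Lc.comp (fderiv ℝ u x)) v = (starRingEnd ℂ) (pd u j x) := rfl
          simp only [ContinuousLinearMap.mul_apply', h1]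
          rw [Complex.conj_mul']
          norm_cast
      _ = -((∫ x, ‖pd u j x‖^2 : ℝ) : ℂ) := by rw [neg_inj]; exact integral_ofReal (𝕜 := ℂ)
  · exact ((Complex.continuous_conj.comp hpd.continuous).mul hpd.continuous).integrable_of_hasCompactSupport
      (HasCompactSupport.mul_left hcpd)
  · exact ((Complex.continuous_conj.comp hu.continuous).mul hpd2c).integrable_of_hasCompactSupport
      (HasCompactSupport.mul_left hcpd2)
  · exact ((Complex.continuous_conj.comp hu.continuous).mul hpd.continuous).integrable_of_hasCompactSupport
      (HasCompactSupport.mul_left hcpd)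

/-- toReal of the L² seminorm as a square root. -/
lemma aux_sqrt {α : Type*} [MeasurableSpace α] {μ : Measure α} {f : α → ℂ}
    (hf : MemLp f 2 μ) :
    (eLpNorm f 2 μ).toReal = Real.sqrt (∫ x, ‖f x‖^2 ∂μ) := by
  have hnn : (0:ℝ) ≤ ∫ x, ‖f x‖ ^ (ENNReal.toReal 2) ∂μ :=
    integral_nonneg fun x => Real.rpow_nonneg (norm_nonneg _) _
  rw [hf.eLpNorm_eq_integral_rpow_norm two_ne_zero ENNReal.ofNat_ne_top,
    ENNReal.toReal_ofReal (Real.rpow_nonneg hnn _)]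
  have h2 : (ENNReal.toReal 2) = (2:ℝ) := by simp
  rw [Real.sqrt_eq_rpow]
  congr 1
  · congr 1
    funext x
    rw [h2, show ((2:ℝ)) = ((2:ℕ):ℝ) by norm_num, Real.rpow_natCast]
  · rw [h2]; norm_num

/-- Real-valued triangle inequality for L² seminorms. -/
lemma aux_add {α : Type*} [MeasurableSpace α] {μ : Measure α} {f g : α → ℂ}
    (hf : MemLp f 2 μ) (hg : MemLp g 2 μ) :
    (eLpNorm (f + g) 2 μ).toReal ≤ (eLpNorm f 2 μ).toReal + (eLpNorm g 2 μ).toReal := by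
  rw [← ENNReal.toReal_add hf.2.ne hg.2.ne]
  exact ENNReal.toReal_mono (ENNReal.add_ne_top.2 ⟨hf.2.ne, hg.2.ne⟩)
    (eLpNorm_add_le hf.1 hg.1 one_le_two)

lemma aux_amgm (a b K : ℝ) (ha : 0 ≤ a) (hb : 0 ≤ b) :
    2*(K*Real.sqrt (a*b)) ≤ a + K^2*b := by
  rw [Real.sqrt_mul ha]
  nlinarith [sq_nonneg (Real.sqrt a - K*Real.sqrt b), Real.sq_sqrt ha, Real.sq_sqrt hb,
    Real.sqrt_nonneg a, Real.sqrt_nonneg b]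

/-- Real-valued scaling bound for L² seminorms. -/
lemma aux_scale {α : Type*} [MeasurableSpace α] {μ : Measure α} {f g : α → ℂ} {c : ℝ}
    (hc : 0 ≤ c) (h : ∀ x, ‖f x‖ ≤ c * ‖g x‖) (hg : MemLp g 2 μ) :
    (eLpNorm f 2 μ).toReal ≤ c * (eLpNorm g 2 μ).toReal := by
  have key : eLpNorm f 2 μ ≤ c.toNNReal • eLpNorm g 2 μ := by
    apply eLpNorm_le_nnreal_smul_eLpNorm_of_ae_le_mul
    refine Filter.Eventually.of_forall fun x => ?_
    rw [← NNReal.coe_le_coe]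
    push_cast
    rw [Real.coe_toNNReal _ hc]
    exact h x
  have hfin : (c.toNNReal • eLpNorm g 2 μ) ≠ ⊤ := by
    rw [ENNReal.smul_def, smul_eq_mul]
    exact ENNReal.mul_ne_top ENNReal.coe_ne_top hg.2.ne
  have := ENNReal.toReal_mono hfin key
  rwa [ENNReal.smul_def, smul_eq_mul, ENNReal.toReal_mul, ENNReal.coe_toReal,
    Real.coe_toNNReal _ hc] at this

end Aux

theorem statement5 {n : ℕ} (hn : 1 ≤ n) (Ω : Set (Fin n → ℝ)) (hΩ : IsOpen Ω)
    (M₁ M₂ : ℝ) :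
    ∃ C₁ : ℝ, 0 < C₁ ∧ ∃ C₂ : ℝ, 0 < C₂ ∧
      ∀ A : (Fin n → ℝ) → (Fin n → ℝ), ContDiff ℝ 1 A →
        (∀ x, ‖A x‖ ≤ M₁) → (∀ x, |divg A x| ≤ M₂) →
        ∀ u : (Fin n → ℝ) → ℂ, ContDiff ℝ (⊤ : ℕ∞) u → HasCompactSupport u →
          tsupport u ⊆ Ω →
          Real.sqrt (∫ x in Ω, ‖lap u x‖^2) ≤
            C₁ * Real.sqrt (∫ x in Ω, ‖magOp A u x‖^2) +
              C₂ * Real.sqrt (∫ x in Ω, ‖u x‖^2) := by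
  classical
  set m1 : ℝ := max M₁ 0 with hm1def
  set m2 : ℝ := max M₂ 0 with hm2def
  have hm1 : 0 ≤ m1 := le_max_right _ _
  have hm2 : 0 ≤ m2 := le_max_right _ _
  set c0 : ℝ := (n:ℝ) * m1^2 + m2 with hc0def
  have hc0 : 0 ≤ c0 := by positivity
  refine ⟨2, two_pos, (2*(n:ℝ)*m1)^2 + 2*c0 + 1, by positivity, ?_⟩
  intro A hA hA1 hA2 u hu hcu hsupp
  -- continuity facts
  have hpdc : ∀ j, Continuous (pd u j) := fun j => (aux_contDiff_pd hu j).continuous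
  have hpd2c : ∀ j, Continuous (pd (pd u j) j) :=
    fun j => (aux_contDiff_pd (aux_contDiff_pd hu j) j).continuous
  have hlapc : Continuous (lap u) := continuous_finset_sum _ fun j _ => hpd2c j
  have hAjc : ∀ j, Continuous (fun x => A x j) := fun j => (continuous_apply j).comp hA.continuous
  have hdivgc : Continuous (divg A) := by
    apply continuous_finset_sum
    intro j _
    have hAj : ContDiff ℝ 1 (fun y => A y j) :=
      (ContinuousLinearMap.proj (R := ℝ) (φ := fun _ : Fin n => ℝ) j).contDiff.comp hA
    exact (hAj.continuous_fderiv one_ne_zero).clm_apply continuous_const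
  -- compact supports
  have hcpd : ∀ j, HasCompactSupport (pd u j) :=
    fun j => aux_hcs_of_subset hcu (aux_support_pd u j)
  have hclap : HasCompactSupport (lap u) := by
    apply aux_hcs_of_subset hcu (aux_support_subset_of_zero fun x hx => ?_)
    exact Finset.sum_eq_zero fun j _ => aux_pd2_zero_off j hx
  -- components of the decomposition
  set S : (Fin n → ℝ) → ℂ := fun x => ∑ j : Fin n, (A x j : ℂ) * pd u j x with hSdef
  set V : (Fin n → ℝ) → ℂ :=
    fun x => (((∑ j : Fin n, (A x j)^2 : ℝ) : ℂ) - Complex.I * ((divg A x : ℝ) : ℂ)) with hVdef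
  have hSc : Continuous S := continuous_finset_sum _ fun j _ =>
    (Complex.continuous_ofReal.comp (hAjc j)).mul (hpdc j)
  have hVc : Continuous V := by
    apply Continuous.sub
    · exact Complex.continuous_ofReal.comp (continuous_finset_sum _ fun j _ => (hAjc j).pow 2)
    · exact continuous_const.mul (Complex.continuous_ofReal.comp hdivgc)
  have hcS : HasCompactSupport S := by
    apply aux_hcs_of_subset hcu (aux_support_subset_of_zero fun x hx => ?_)
    exact Finset.sum_eq_zero fun j _ => by rw [aux_pd_zero_off j hx, mul_zero]
  have hmagc : Continuous (magOp A u) := by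
    have : magOp A u = fun x => - lap u x - 2 * Complex.I * S x + V x * u x := rfl
    rw [this]
    exact ((hlapc.neg.sub (continuous_const.mul hSc)).add (hVc.mul hu.continuous))
  have hcmag : HasCompactSupport (magOp A u) := by
    apply aux_hcs_of_subset hcu (aux_support_subset_of_zero fun x hx => ?_)
    have h0 : u x = 0 := image_eq_zero_of_notMem_tsupport hx
    have hl : lap u x = 0 := Finset.sum_eq_zero fun j _ => aux_pd2_zero_off j hx
    have hs : S x = 0 := Finset.sum_eq_zero fun j _ => by rw [aux_pd_zero_off j hx, mul_zero]
    show - lap u x - 2 * Complex.I * S x + V x * u x = 0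
    rw [h0, hl, hs]; ring
  -- MemLp facts
  have mu : MemLp u 2 (volume : Measure (Fin n → ℝ)) :=
    hu.continuous.memLp_of_hasCompactSupport hcu
  have mlap : MemLp (lap u) 2 (volume : Measure (Fin n → ℝ)) :=
    hlapc.memLp_of_hasCompactSupport hclap
  have mpd : ∀ j, MemLp (pd u j) 2 (volume : Measure (Fin n → ℝ)) :=
    fun j => (hpdc j).memLp_of_hasCompactSupport (hcpd j)
  have mS : MemLp S 2 (volume : Measure (Fin n → ℝ)) := hSc.memLp_of_hasCompactSupport hcS
  have mmag : MemLp (magOp A u) 2 (volume : Measure (Fin n → ℝ)) :=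
    hmagc.memLp_of_hasCompactSupport hcmag
  have mT2 : MemLp (fun x => -(2 * Complex.I * S x)) 2 (volume : Measure (Fin n → ℝ)) :=
    ((continuous_const.mul hSc).neg.memLp_of_hasCompactSupport
      (by
        apply aux_hcs_of_subset hcu (aux_support_subset_of_zero fun x hx => ?_)
        have hs : S x = 0 := Finset.sum_eq_zero fun j _ => by rw [aux_pd_zero_off j hx, mul_zero]
        simp [hs]))
  have mT3 : MemLp (fun x => V x * u x) 2 (volume : Measure (Fin n → ℝ)) :=
    ((hVc.mul hu.continuous).memLp_of_hasCompactSupport (hcu.mul_left))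
  -- real quantities
  set a : ℝ := Real.sqrt (∫ x, ‖lap u x‖^2) with hadef
  set b : ℝ := Real.sqrt (∫ x, ‖u x‖^2) with hbdef
  set H : ℝ := Real.sqrt (∫ x, ‖magOp A u x‖^2) with hHdef
  have ha0 : 0 ≤ a := Real.sqrt_nonneg _
  have hb0 : 0 ≤ b := Real.sqrt_nonneg _
  have hH0 : 0 ≤ H := Real.sqrt_nonneg _
  have haeq : (eLpNorm (lap u) 2 volume).toReal = a := aux_sqrt mlap
  have hbeq : (eLpNorm u 2 volume).toReal = b := aux_sqrt mu
  have hHeq : (eLpNorm (magOp A u) 2 volume).toReal = H := aux_sqrt mmag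
  -- integration by parts: gradient bound
  set g2 : ℝ := ∑ j : Fin n, ∫ x, ‖pd u j x‖^2 with hg2def
  have hg2nn : 0 ≤ g2 := Finset.sum_nonneg fun j _ => integral_nonneg fun x => by positivity
  have hibp : ∫ x, (starRingEnd ℂ) (u x) * lap u x = -((g2 : ℝ) : ℂ) := by
    have h1 : ∀ x, (starRingEnd ℂ) (u x) * lap u x
        = ∑ j : Fin n, (starRingEnd ℂ) (u x) * pd (pd u j) j x := by
      intro x; rw [lap, Finset.mul_sum]
    rw [show (fun x => (starRingEnd ℂ) (u x) * lap u x) =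
        fun x => ∑ j : Fin n, (starRingEnd ℂ) (u x) * pd (pd u j) j x from funext h1]
    rw [integral_finset_sum]
    · rw [hg2def]
      push_cast
      rw [← Finset.sum_neg_distrib]
      exact Finset.sum_congr rfl fun j _ => aux_ibp hu hcu j
    · intro j _
      exact ((Complex.continuous_conj.comp hu.continuous).mul (hpd2c j)).integrable_of_hasCompactSupport
        (HasCompactSupport.mul_left
          (aux_hcs_of_subset hcu ((aux_support_pd (pd u j) j).trans (aux_tsupport_pd_subset u j))))
  have hg2ab : g2 ≤ b * a := by
    have hrp : ∀ f : (Fin n → ℝ) → ℂ, (∫ x, ‖f x‖^(2:ℝ)) ^ ((1:ℝ)/2)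
        = Real.sqrt (∫ x, ‖f x‖^2) := by
      intro f
      have hpow : ∀ x : Fin n → ℝ, ‖f x‖ ^ (2:ℝ) = ‖f x‖^2 :=
        fun x => by rw [show ((2:ℝ)) = ((2:ℕ):ℝ) by norm_num, Real.rpow_natCast]
      simp_rw [hpow, Real.sqrt_eq_rpow]
    have h1 : g2 = ‖∫ x, (starRingEnd ℂ) (u x) * lap u x‖ := by
      rw [hibp, norm_neg, Complex.norm_real, Real.norm_eq_abs]
      exact (_root_.abs_of_nonneg hg2nn).symm
    have h2 : ‖∫ x, (starRingEnd ℂ) (u x) * lap u x‖ ≤ ∫ x, ‖u x‖ * ‖lap u x‖ := by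
      refine (norm_integral_le_integral_norm _).trans_eq ?_
      congr 1; funext x; simp [norm_mul]
    have h3 : ∫ x, ‖u x‖ * ‖lap u x‖ ≤
        (∫ x, ‖u x‖^(2:ℝ)) ^ ((1:ℝ)/2) * (∫ x, ‖lap u x‖^(2:ℝ)) ^ ((1:ℝ)/2) := by
      apply integral_mul_le_Lp_mul_Lq_of_nonneg (Real.holderConjugate_iff.mpr ⟨one_lt_two, by norm_num⟩)
        (Filter.Eventually.of_forall fun x => norm_nonneg _)
        (Filter.Eventually.of_forall fun x => norm_nonneg _)
      · rw [show ENNReal.ofReal (2:ℝ) = 2 by norm_num]; exact mu.norm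
      · rw [show ENNReal.ofReal (2:ℝ) = 2 by norm_num]; exact mlap.norm
    rw [h1]
    refine (h2.trans h3).trans_eq ?_
    rw [hrp, hrp, hbdef, hadef]
  -- per-coordinate gradient bound
  set s : ℝ := Real.sqrt (a*b) with hsdef
  have hs0 : 0 ≤ s := Real.sqrt_nonneg _
  have hgj : ∀ j : Fin n, (eLpNorm (pd u j) 2 volume).toReal ≤ s := by
    intro j
    rw [aux_sqrt (mpd j), hsdef]
    apply Real.sqrt_le_sqrt
    calc ∫ x, ‖pd u j x‖^2
        ≤ g2 := Finset.single_le_sum (f := fun j : Fin n => ∫ x, ‖pd u j x‖^2)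
          (fun i _ => integral_nonneg fun x => by positivity) (Finset.mem_univ j)
      _ ≤ b*a := hg2ab
      _ = a*b := mul_comm _ _
  -- bound on the entries of A
  have hAm : ∀ x j, |A x j| ≤ m1 := by
    intro x j
    calc |A x j| = ‖A x j‖ := (Real.norm_eq_abs _).symm
      _ ≤ ‖A x‖ := norm_le_pi_norm (A x) j
      _ ≤ M₁ := hA1 x
      _ ≤ m1 := le_max_left _ _
  -- L² bound on S
  have mterm : ∀ j : Fin n, MemLp (fun x => (A x j : ℂ) * pd u j x) 2
      (volume : Measure (Fin n → ℝ)) := fun j =>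
    ((Complex.continuous_ofReal.comp (hAjc j)).mul (hpdc j)).memLp_of_hasCompactSupport
      (HasCompactSupport.mul_left (hcpd j))
  have hSb : (eLpNorm S 2 volume).toReal ≤ (n:ℝ) * (m1 * s) := by
    have h1 : eLpNorm S 2 volume
        ≤ ∑ j : Fin n, eLpNorm (fun x => (A x j : ℂ) * pd u j x) 2 volume := by
      have hS2 : S = ∑ j : Fin n, (fun x => (A x j : ℂ) * pd u j x) := by
        funext x; rw [hSdef]; simp [Finset.sum_apply]
      rw [hS2]
      exact eLpNorm_sum_le (fun j _ => (mterm j).1) one_le_two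
    have h2 : (eLpNorm S 2 volume).toReal
        ≤ ∑ j : Fin n, (eLpNorm (fun x => (A x j : ℂ) * pd u j x) 2 volume).toReal := by
      refine (ENNReal.toReal_mono ?_ h1).trans_eq (ENNReal.toReal_sum fun j _ => (mterm j).2.ne)
      exact ENNReal.sum_ne_top.2 fun j _ => (mterm j).2.ne
    refine h2.trans ?_
    have h3 : ∀ j : Fin n, (eLpNorm (fun x => (A x j : ℂ) * pd u j x) 2 volume).toReal
        ≤ m1 * s := by
      intro j
      refine (aux_scale hm1 (fun x => ?_) (mpd j)).trans ?_
      · rw [norm_mul, Complex.norm_real, Real.norm_eq_abs]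
        exact mul_le_mul_of_nonneg_right (hAm x j) (norm_nonneg _)
      · exact mul_le_mul_of_nonneg_left (hgj j) hm1
    calc ∑ j : Fin n, (eLpNorm (fun x => (A x j : ℂ) * pd u j x) 2 volume).toReal
        ≤ ∑ _j : Fin n, m1 * s := Finset.sum_le_sum fun j _ => h3 j
      _ = (n:ℝ) * (m1 * s) := by simp [Finset.sum_const, mul_comm]
  -- triangle inequality
  have hdecomp : lap u = (fun x => -(magOp A u x))
      + ((fun x => -(2*Complex.I*S x)) + fun x => V x * u x) := by
    funext x
    have hrfl : magOp A u x = - lap u x - 2 * Complex.I * S x + V x * u x := rfl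
    simp only [Pi.add_apply]
    rw [hrfl]; ring
  have hT1 : (eLpNorm (fun x => -(magOp A u x)) 2 (volume : Measure (Fin n → ℝ))).toReal = H := by
    rw [show (fun x => -(magOp A u x)) = -(magOp A u) from rfl, eLpNorm_neg, hHeq]
  have htri : a ≤ H + ((eLpNorm (fun x => -(2*Complex.I*S x)) 2 volume).toReal
      + (eLpNorm (fun x => V x * u x) 2 volume).toReal) := by
    calc a = (eLpNorm (lap u) 2 volume).toReal := haeq.symm
      _ = (eLpNorm ((fun x => -(magOp A u x))
          + ((fun x => -(2*Complex.I*S x)) + fun x => V x * u x)) 2 volume).toReal := by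
          rw [← hdecomp]
      _ ≤ (eLpNorm (fun x => -(magOp A u x)) 2 volume).toReal
          + (eLpNorm ((fun x => -(2*Complex.I*S x)) + fun x => V x * u x) 2 volume).toReal :=
          aux_add mmag.neg (mT2.add mT3)
      _ ≤ H + ((eLpNorm (fun x => -(2*Complex.I*S x)) 2 volume).toReal
          + (eLpNorm (fun x => V x * u x) 2 volume).toReal) := by
          rw [hT1]
          exact add_le_add_right (aux_add mT2 mT3) H
  have hT2b : (eLpNorm (fun x => -(2*Complex.I*S x)) 2 (volume : Measure (Fin n → ℝ))).toReal
      ≤ 2 * (eLpNorm S 2 volume).toReal := by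
    refine aux_scale (by norm_num) (fun x => ?_) mS
    rw [norm_neg, norm_mul, norm_mul]
    simp
  have hT3b : (eLpNorm (fun x => V x * u x) 2 (volume : Measure (Fin n → ℝ))).toReal
      ≤ c0 * b := by
    rw [← hbeq]
    refine aux_scale hc0 (fun x => ?_) mu
    rw [norm_mul]
    refine mul_le_mul_of_nonneg_right ?_ (norm_nonneg _)
    calc ‖V x‖ ≤ ‖(((∑ j : Fin n, (A x j)^2 : ℝ)) : ℂ)‖ + ‖Complex.I * ((divg A x : ℝ) : ℂ)‖ :=
        norm_sub_le _ _
      _ ≤ (n:ℝ) * m1^2 + m2 := by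
          apply add_le_add
          · rw [Complex.norm_real, Real.norm_eq_abs,
              _root_.abs_of_nonneg (Finset.sum_nonneg fun j _ => sq_nonneg _)]
            calc ∑ j : Fin n, (A x j)^2 ≤ ∑ _j : Fin n, m1^2 := by
                  refine Finset.sum_le_sum fun j _ => ?_
                  rw [← _root_.sq_abs]
                  exact pow_le_pow_left₀ (abs_nonneg _) (hAm x j) 2
              _ = (n:ℝ) * m1^2 := by simp [Finset.sum_const, mul_comm]
          · rw [norm_mul, Complex.norm_I, one_mul, Complex.norm_real, Real.norm_eq_abs]
            exact le_trans (hA2 x) (le_max_left _ _)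
  -- assemble the main real inequality
  have hmain : a ≤ H + (2*((n:ℝ)*(m1*s)) + c0*b) := by
    refine htri.trans ?_
    apply add_le_add_right
    apply add_le_add _ hT3b
    exact hT2b.trans (by nlinarith [hSb])
  -- absorption
  have hKs : 2 * (2*(n:ℝ)*m1*s) ≤ a + (2*(n:ℝ)*m1)^2 * b := by
    rw [hsdef]
    exact aux_amgm a b (2*(n:ℝ)*m1) ha0 hb0
  -- rewrite set integrals as full integrals
  have hnot : ∀ x, x ∉ Ω → x ∉ tsupport u := fun x hx h => hx (hsupp h)
  have hset : ∀ (f : (Fin n → ℝ) → ℂ), (∀ x, x ∉ Ω → f x = 0) →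
      ∫ x in Ω, ‖f x‖^2 = ∫ x, ‖f x‖^2 := by
    intro f hf
    exact setIntegral_eq_integral_of_forall_compl_eq_zero fun x hx => by rw [hf x hx]; simp
  rw [hset (lap u) (fun x hx => Finset.sum_eq_zero fun j _ => aux_pd2_zero_off j (hnot x hx)),
    hset (magOp A u) (fun x hx => by
      have hx' := hnot x hx
      have h0 : u x = 0 := image_eq_zero_of_notMem_tsupport hx'
      have hl : lap u x = 0 := Finset.sum_eq_zero fun j _ => aux_pd2_zero_off j hx'
      have hs : S x = 0 := Finset.sum_eq_zero fun j _ => by rw [aux_pd_zero_off j hx', mul_zero]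
      show - lap u x - 2 * Complex.I * S x + V x * u x = 0
      rw [h0, hl, hs]; ring),
    hset u (fun x hx => image_eq_zero_of_notMem_tsupport (hnot x hx))]
  show a ≤ 2 * H + ((2*(n:ℝ)*m1)^2 + 2*c0 + 1) * b
  linarith [hmain, hKs, hb0, hH0]
end

section
/- Let n ≥ 1, x₀ ∈ ℝⁿ, r > 0, and let B be the open ball of center x₀ and radius r. Let f = (f₁,…,fₙ) : ℝⁿ → ℝⁿ be Lipschitz on B, and assume that for Lebesgue-almost every x ∈ B, f has a total derivative Df(x) at x which is symmetric, i.e. ∂_i f_j(x) = ∂_j f_i(x) for all 1 ≤ i,j ≤ n. Define φ : B → ℝ by φ(x) = ∫₀¹ ⟨ f(x₀ + t(x − x₀)), x − x₀ ⟩ dt. Then for every x ∈ B, φ is differentiable at x and ∇φ(x) = f(x). -/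
open MeasureTheory Complex

open Filter Set Finset


lemma lipschitz_ftc {C : NNReal} {g c : ℝ → ℝ} (hg : LipschitzWith C g)
    (hd : ∀ᵐ s ∂(volume.restrict (Set.Ioo (0:ℝ) 1)), HasDerivAt g (c s) s) :
    ∫ s in (0:ℝ)..1, c s = g 1 - g 0 := by
  set μ := volume.restrict (Set.Ioo (0:ℝ) 1) with hμ
  have hgc : Continuous g := hg.continuous
  have hgi : ∀ a b : ℝ, IntervalIntegrable g volume a b := fun a b =>
    hgc.intervalIntegrable a b
  have conv : ∀ f : ℝ → ℝ, (∫ s in (0:ℝ)..1, f s) = ∫ s, f s ∂μ := by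
    intro f
    rw [intervalIntegral.integral_of_le zero_le_one, ← integral_Ioc_eq_integral_Ioo]
  -- Step 1: DCT
  have step1 : Tendsto (fun h => ∫ s, (g (s + h) - g s) / h ∂μ) (nhdsWithin (0:ℝ) {0}ᶜ)
      (nhds (∫ s, c s ∂μ)) := by
    apply tendsto_integral_filter_of_dominated_convergence (fun _ => (C:ℝ))
    · exact Eventually.of_forall fun h =>
        (((hgc.comp (continuous_id.add continuous_const)).sub hgc).div_const h).aestronglyMeasurable
    · refine Eventually.of_forall fun h => Eventually.of_forall fun s => ?_
      rcases eq_or_ne h 0 with rfl | hh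
      · simp
      · have h1 : |g (s + h) - g s| ≤ (C:ℝ) * |h| := by
          have := hg.dist_le_mul (s + h) s
          simpa [Real.dist_eq] using this
        have h2 : |(g (s + h) - g s) / h| = |g (s + h) - g s| / |h| := by
          rw [abs_div]
        rw [Real.norm_eq_abs, h2, div_le_iff₀ (abs_pos.mpr hh)]
        exact h1
    · exact integrable_const _
    · filter_upwards [hd] with s hs
      have := hs.tendsto_slope_zero
      simpa [smul_eq_mul, div_eq_inv_mul] using this
  -- Step 2: identity for h ≠ 0
  have step2 : ∀ h : ℝ, h ≠ 0 → (∫ s, (g (s + h) - g s) / h ∂μ)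
      = (∫ u in (1:ℝ)..1 + h, g u) / h - (∫ u in (0:ℝ)..0 + h, g u) / h := by
    intro h hh
    rw [← conv]
    have hint1 : IntervalIntegrable (fun s => g (s + h)) volume 0 1 :=
      (hgc.comp (continuous_id.add continuous_const)).intervalIntegrable 0 1
    have e1 : (∫ s in (0:ℝ)..1, (g (s + h) - g s) / h)
        = ((∫ s in (0:ℝ)..1, g (s + h)) - ∫ s in (0:ℝ)..1, g s) / h := by
      rw [← intervalIntegral.integral_sub hint1 (hgi 0 1)]
      simp [intervalIntegral.integral_div]
    rw [e1, intervalIntegral.integral_comp_add_right g h]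
    have e2 : (∫ u in (0:ℝ)+h..1+h, g u) = (∫ u in (0:ℝ)+h..1, g u) + ∫ u in (1:ℝ)..1+h, g u :=
      (intervalIntegral.integral_add_adjacent_intervals (hgi _ _) (hgi _ _)).symm
    have e3 : (∫ u in (0:ℝ)..1, g u) = (∫ u in (0:ℝ)..0+h, g u) + ∫ u in (0:ℝ)+h..1, g u :=
      (intervalIntegral.integral_add_adjacent_intervals (hgi _ _) (hgi _ _)).symm
    rw [e2, e3]
    ring
  -- Step 3: limits of boundary terms
  have key : ∀ a : ℝ, Tendsto (fun h : ℝ => (∫ u in a..a + h, g u) / h)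
      (nhdsWithin (0:ℝ) {0}ᶜ) (nhds (g a)) := by
    intro a
    have hG : HasDerivAt (fun u => ∫ t in a..u, g t) (g a) a :=
      intervalIntegral.integral_hasDerivAt_right (hgi a a)
        hgc.stronglyMeasurable.stronglyMeasurableAtFilter hgc.continuousAt
    have := hG.tendsto_slope_zero
    simpa [smul_eq_mul, div_eq_inv_mul, intervalIntegral.integral_same] using this
  have step3 : Tendsto (fun h : ℝ => (∫ u in (1:ℝ)..1 + h, g u) / h - (∫ u in (0:ℝ)..0 + h, g u) / h)
      (nhdsWithin (0:ℝ) {0}ᶜ) (nhds (g 1 - g 0)) := (key 1).sub (key 0)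
  have heq : (fun h => ∫ s, (g (s + h) - g s) / h ∂μ) =ᶠ[nhdsWithin (0:ℝ) {0}ᶜ]
      (fun h : ℝ => (∫ u in (1:ℝ)..1 + h, g u) / h - (∫ u in (0:ℝ)..0 + h, g u) / h) := by
    filter_upwards [self_mem_nhdsWithin] with h hh
    exact step2 h hh
  have := tendsto_nhds_unique (step1.congr' heq) step3
  rw [conv]
  exact this

lemma sym_pair {n : ℕ} (D : (Fin n → ℝ) →L[ℝ] (Fin n → ℝ))
    (h : ∀ i j : Fin n, D (Pi.single i 1) j = D (Pi.single j 1) i) (a b : Fin n → ℝ) :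
    ∑ j, D a j * b j = ∑ j, D b j * a j := by
  have key : ∀ v : Fin n → ℝ, ∀ j, D v j = ∑ i, v i * D (Pi.single i 1) j := by
    intro v j
    have hv : v = ∑ i, v i • (Pi.single i 1 : Fin n → ℝ) := by
      funext k
      simp [Pi.single_apply, Finset.sum_apply, mul_ite]
    conv_lhs => rw [hv]
    rw [map_sum]
    simp [Finset.sum_apply, smul_eq_mul]
  calc ∑ j, D a j * b j = ∑ j, ∑ i, a i * D (Pi.single i 1) j * b j := by
        refine Finset.sum_congr rfl fun j _ => ?_
        rw [key a j, Finset.sum_mul]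
    _ = ∑ i, ∑ j, a i * D (Pi.single i 1) j * b j := Finset.sum_comm
    _ = ∑ i, ∑ j, b j * D (Pi.single j 1) i * a i := by
        refine Finset.sum_congr rfl fun i _ => Finset.sum_congr rfl fun j _ => ?_
        rw [h i j]; ring
    _ = ∑ i, D b i * a i := by
        refine Finset.sum_congr rfl fun i _ => ?_
        rw [key b i, Finset.sum_mul]

lemma dot_abs_le {n : ℕ} (a b : Fin n → ℝ) : |∑ j, a j * b j| ≤ n * ‖a‖ * ‖b‖ := by
  calc |∑ j, a j * b j| ≤ ∑ j, |a j * b j| := Finset.abs_sum_le_sum_abs _ _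
    _ ≤ ∑ _j : Fin n, ‖a‖ * ‖b‖ := by
        refine Finset.sum_le_sum fun j _ => ?_
        rw [abs_mul]
        exact mul_le_mul (norm_le_pi_norm a j) (norm_le_pi_norm b j) (abs_nonneg _) (norm_nonneg _)
    _ = n * ‖a‖ * ‖b‖ := by simp [mul_assoc]

lemma comb_mem_ball {n : ℕ} {x₀ u v : Fin n → ℝ} {r : ℝ} (hu : u ∈ Metric.ball x₀ r)
    (hv : v ∈ Metric.ball x₀ r) {s : ℝ} (hs : s ∈ Set.Icc (0:ℝ) 1) :
    u + s • (v - u) ∈ Metric.ball x₀ r := by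
  have h := (convex_ball x₀ r) hu hv (by linarith [hs.2] : (0:ℝ) ≤ 1 - s) hs.1 (by ring)
  have he : u + s • (v - u) = (1 - s) • u + s • v := by
    funext i; simp [Pi.smul_apply, smul_eq_mul, Pi.add_apply, Pi.sub_apply]; ring
  rwa [he]

lemma scaled_mem_ball {n : ℕ} {x₀ w : Fin n → ℝ} {r ρ : ℝ} (hw : ‖w‖ ≤ ρ) (hρ : ρ < r)
    {t : ℝ} (ht : t ∈ Set.Icc (0:ℝ) 1) : x₀ + t • w ∈ Metric.ball x₀ r := by
  rw [Metric.mem_ball, dist_eq_norm]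
  have : ‖x₀ + t • w - x₀‖ = |t| * ‖w‖ := by rw [add_sub_cancel_left, norm_smul, Real.norm_eq_abs]
  rw [this, _root_.abs_of_nonneg ht.1]
  calc t * ‖w‖ ≤ 1 * ρ := mul_le_mul ht.2 hw (norm_nonneg _) zero_le_one
    _ < r := by linarith

lemma f_bound {n : ℕ} {x₀ : Fin n → ℝ} {r : ℝ} (hr : 0 < r) {f : (Fin n → ℝ) → (Fin n → ℝ)}
    {K : NNReal} (hf : LipschitzOnWith K f (Metric.ball x₀ r)) {z : Fin n → ℝ}
    (hz : z ∈ Metric.ball x₀ r) : ‖f z‖ ≤ ‖f x₀‖ + K * r := by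
  have h0 : x₀ ∈ Metric.ball x₀ r := Metric.mem_ball_self hr
  have := hf.dist_le_mul z hz x₀ h0
  have hd : dist z x₀ ≤ r := le_of_lt (Metric.mem_ball.mp hz)
  have h1 : dist (f z) (f x₀) ≤ K * r := this.trans (by
    exact mul_le_mul_of_nonneg_left hd (NNReal.coe_nonneg K))
  calc ‖f z‖ ≤ ‖f x₀‖ + dist (f z) (f x₀) := by
        rw [dist_eq_norm]
        have := norm_sub_norm_le (f z) (f x₀)
        linarith [abs_le.mp (le_refl |‖f z‖ - ‖f x₀‖|)]
    _ ≤ ‖f x₀‖ + K * r := by linarith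

lemma pathwise_cont {n : ℕ} {x₀ : Fin n → ℝ} {r : ℝ} {f : (Fin n → ℝ) → (Fin n → ℝ)}
    {K : NNReal} (hf : LipschitzOnWith K f (Metric.ball x₀ r)) {p : ℝ → (Fin n → ℝ)}
    (hp : Continuous p) {S : Set ℝ} (hS : ∀ t ∈ S, p t ∈ Metric.ball x₀ r) (q : Fin n → ℝ) :
    ContinuousOn (fun t => ∑ j, f (p t) j * q j) S := by
  have h1 : ContinuousOn (fun t => f (p t)) S :=
    hf.continuousOn.comp hp.continuousOn hS
  exact continuousOn_finset_sum _ fun j _ =>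
    (((continuous_apply j).comp_continuousOn h1).mul continuousOn_const)


lemma ae_good {n : ℕ} (x₀ x : Fin n → ℝ) {r : ℝ} (hr : 0 < r) (hx : x ∈ Metric.ball x₀ r)
    {E : Set (Fin n → ℝ)} (hE : MeasurableSet E)
    (hEfull : volume (Metric.ball x₀ r \ E) = 0) :
    ∀ᵐ y ∂(volume.restrict (Metric.ball x₀ r)),
      ∀ᵐ s ∂(volume.restrict (Set.Ioo (0:ℝ) 1)),
        ∀ᵐ t ∂(volume.restrict (Set.Ioo (0:ℝ) 1)),
          x₀ + t • ((x - x₀) + s • (y - x)) ∈ E := by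
  set μI := volume.restrict (Set.Ioo (0:ℝ) 1) with hμI
  set ν := volume.restrict (Metric.ball x₀ r) with hν
  set Γ : (ℝ × ℝ) × (Fin n → ℝ) → (Fin n → ℝ) :=
    fun p => x₀ + p.1.2 • ((x - x₀) + p.1.1 • (p.2 - x)) with hΓdef
  have hΓ : Continuous Γ := by
    apply continuous_const.add
    exact (continuous_fst.snd).smul (continuous_const.add
      ((continuous_fst.fst).smul (continuous_snd.sub continuous_const)))
  have hSmeas : MeasurableSet (Γ ⁻¹' Eᶜ) := hΓ.measurable hE.compl
  -- slices are null
  have hslice : ∀ᵐ q ∂(μI.prod μI), ν (Prod.mk q ⁻¹' (Γ ⁻¹' Eᶜ)) = 0 := by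
    have hmem : ∀ᵐ q ∂(μI.prod μI), q ∈ Set.Ioo (0:ℝ) 1 ×ˢ Set.Ioo (0:ℝ) 1 := by
      rw [hμI, Measure.prod_restrict]
      exact ae_restrict_mem (measurableSet_Ioo.prod measurableSet_Ioo)
    filter_upwards [hmem] with q hq
    obtain ⟨hs, ht⟩ := hq
    set s := q.1; set t := q.2
    have hc : t * s ≠ 0 := ne_of_gt (mul_pos ht.1 hs.1)
    set A : Fin n → ℝ := x₀ + t • (x - x₀) - (t * s) • x with hA
    have hΓeq : ∀ y : Fin n → ℝ, Γ (q, y) = A + (t * s) • y := by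
      intro y
      funext i
      simp only [hΓdef, hA, Pi.add_apply, Pi.sub_apply, Pi.smul_apply, smul_eq_mul]
      ring
    have hmeas2 : MeasurableSet (Prod.mk q ⁻¹' (Γ ⁻¹' Eᶜ)) :=
      (hΓ.comp (Continuous.prodMk_right q)).measurable hE.compl
    rw [hν, Measure.restrict_apply hmeas2]
    have hsub : Prod.mk q ⁻¹' (Γ ⁻¹' Eᶜ) ∩ Metric.ball x₀ r ⊆
        (fun y => A + (t * s) • y) ⁻¹' (Metric.ball x₀ r \ E) := by
      rintro y ⟨hyE, hyB⟩
      have hΓball : Γ (q, y) ∈ Metric.ball x₀ r := by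
        have h1 : x + s • (y - x) ∈ Metric.ball x₀ r :=
          comb_mem_ball hx hyB ⟨le_of_lt hs.1, le_of_lt hs.2⟩
        have h2 : (x - x₀) + s • (y - x) = (x + s • (y - x)) - x₀ := by
          funext i; simp [Pi.add_apply, Pi.sub_apply]; ring
        have h3 : ‖(x - x₀) + s • (y - x)‖ < r := by
          rw [h2, ← dist_eq_norm]; exact Metric.mem_ball.mp h1
        exact scaled_mem_ball le_rfl h3 ⟨le_of_lt ht.1, le_of_lt ht.2⟩
      rw [Set.mem_preimage, ← hΓeq]
      exact ⟨hΓball, hyE⟩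
    refine le_antisymm (le_trans (measure_mono hsub) (le_of_eq ?_)) zero_le
    have hcomp : (fun y : Fin n → ℝ => A + (t * s) • y)
        = (fun z => A + z) ∘ (fun y => (t * s) • y) := rfl
    rw [hcomp, Set.preimage_comp]
    rw [Measure.addHaar_preimage_smul volume hc, measure_preimage_add, hEfull, mul_zero]
  -- product is null
  haveI : SFinite ν := by rw [hν]; infer_instance
  have hprodnull : ((μI.prod μI).prod ν) (Γ ⁻¹' Eᶜ) = 0 :=
    (Measure.measure_prod_null hSmeas).mpr hslice
  -- swap
  have hswapnull : (ν.prod (μI.prod μI)) (Prod.swap ⁻¹' (Γ ⁻¹' Eᶜ)) = 0 := by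
    rw [← Measure.prod_swap, Measure.map_apply measurable_swap (measurable_swap hSmeas)]
    have : Prod.swap ⁻¹' (Prod.swap ⁻¹' (Γ ⁻¹' Eᶜ)) = Γ ⁻¹' Eᶜ := by
      ext p; simp
    rw [this]; exact hprodnull
  have hae := Measure.measure_ae_null_of_prod_null hswapnull
  filter_upwards [hae] with y hy
  have : ∀ᵐ q ∂(μI.prod μI), Γ (q, y) ∈ E := by
    rw [ae_iff]
    convert hy using 2
    rfl
    rfl
  exact Measure.ae_ae_of_ae_prod this
lemma w_norm_lt {n : ℕ} {x₀ x y : Fin n → ℝ} {r : ℝ} (hx : x ∈ Metric.ball x₀ r)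
    (hy : y ∈ Metric.ball x₀ r) {σ : ℝ} (hσ : σ ∈ Set.Icc (0:ℝ) 1) :
    ‖(x - x₀) + σ • (y - x)‖ < r := by
  have h1 := comb_mem_ball hx hy hσ
  have h2 : (x - x₀) + σ • (y - x) = (x + σ • (y - x)) - x₀ := by
    funext i; simp [Pi.add_apply, Pi.sub_apply]; ring
  rw [h2, ← dist_eq_norm]
  exact Metric.mem_ball.mp h1

lemma gamma_mem {n : ℕ} {x₀ x y : Fin n → ℝ} {r : ℝ} (hx : x ∈ Metric.ball x₀ r)
    (hy : y ∈ Metric.ball x₀ r) {σ t : ℝ} (hσ : σ ∈ Set.Icc (0:ℝ) 1)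
    (ht : t ∈ Set.Icc (0:ℝ) 1) :
    x₀ + t • ((x - x₀) + σ • (y - x)) ∈ Metric.ball x₀ r :=
  scaled_mem_ball le_rfl (w_norm_lt hx hy hσ) ht

lemma F_lip {n : ℕ} {x₀ x y : Fin n → ℝ} {r : ℝ} (hr : 0 < r)
    {f : (Fin n → ℝ) → (Fin n → ℝ)} {K : NNReal}
    (hf : LipschitzOnWith K f (Metric.ball x₀ r))
    (hx : x ∈ Metric.ball x₀ r) (hy : y ∈ Metric.ball x₀ r)
    {σ σ' t : ℝ} (hσ : σ ∈ Set.Icc (0:ℝ) 1) (hσ' : σ' ∈ Set.Icc (0:ℝ) 1)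
    (ht : t ∈ Set.Icc (0:ℝ) 1) :
    |(∑ j, f (x₀ + t • ((x - x₀) + σ' • (y - x))) j * ((x - x₀) + σ' • (y - x)) j)
      - (∑ j, f (x₀ + t • ((x - x₀) + σ • (y - x))) j * ((x - x₀) + σ • (y - x)) j)|
    ≤ (n * ‖y - x‖ * (K * r + (‖f x₀‖ + K * r))) * |σ' - σ| := by
  set w := fun u : ℝ => (x - x₀) + u • (y - x) with hw
  set γ := fun (u t' : ℝ) => x₀ + t' • w u with hγ
  have hγ' : γ σ' t ∈ Metric.ball x₀ r := gamma_mem hx hy hσ' ht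
  have hγ0 : γ σ t ∈ Metric.ball x₀ r := gamma_mem hx hy hσ ht
  have split : (∑ j, f (γ σ' t) j * w σ' j) - (∑ j, f (γ σ t) j * w σ j)
      = (∑ j, (f (γ σ' t) - f (γ σ t)) j * w σ' j)
        + ∑ j, f (γ σ t) j * ((σ' - σ) • (y - x)) j := by
    rw [← Finset.sum_sub_distrib, ← Finset.sum_add_distrib]
    refine Finset.sum_congr rfl fun j _ => ?_
    simp only [Pi.sub_apply, Pi.smul_apply, smul_eq_mul, hw, Pi.add_apply]
    ring
  have hd1 : ‖f (γ σ' t) - f (γ σ t)‖ ≤ K * (|σ' - σ| * ‖y - x‖) := by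
    have := hf.dist_le_mul (γ σ' t) hγ' (γ σ t) hγ0
    rw [dist_eq_norm, dist_eq_norm] at this
    have heq : γ σ' t - γ σ t = (t * (σ' - σ)) • (y - x) := by
      funext i
      simp only [hγ, hw, Pi.sub_apply, Pi.add_apply, Pi.smul_apply, smul_eq_mul]
      ring
    have hn : ‖γ σ' t - γ σ t‖ ≤ |σ' - σ| * ‖y - x‖ := by
      rw [heq, norm_smul, Real.norm_eq_abs, abs_mul]
      have : |t| ≤ 1 := abs_le.mpr ⟨by linarith [ht.1], ht.2⟩
      nlinarith [mul_nonneg (abs_nonneg (σ' - σ)) (norm_nonneg (y - x))]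
    calc ‖f (γ σ' t) - f (γ σ t)‖ ≤ K * ‖γ σ' t - γ σ t‖ := this
      _ ≤ K * (|σ' - σ| * ‖y - x‖) := by
          exact mul_le_mul_of_nonneg_left hn (NNReal.coe_nonneg K)
  have hwb : ‖w σ'‖ ≤ r := le_of_lt (w_norm_lt hx hy hσ')
  have hfb : ‖f (γ σ t)‖ ≤ ‖f x₀‖ + K * r := f_bound hr hf hγ0
  rw [split]
  have t1 : |∑ j, (f (γ σ' t) - f (γ σ t)) j * w σ' j| ≤ n * (K * (|σ' - σ| * ‖y - x‖)) * r := by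
    calc |∑ j, (f (γ σ' t) - f (γ σ t)) j * w σ' j|
        ≤ n * ‖f (γ σ' t) - f (γ σ t)‖ * ‖w σ'‖ := dot_abs_le _ _
      _ ≤ n * (K * (|σ' - σ| * ‖y - x‖)) * r := by
          have hn0 : (0:ℝ) ≤ n := Nat.cast_nonneg n
          have := mul_le_mul (mul_le_mul_of_nonneg_left hd1 hn0) hwb (norm_nonneg _)
            (by positivity)
          exact this
  have t2 : |∑ j, f (γ σ t) j * ((σ' - σ) • (y - x)) j|
      ≤ n * (‖f x₀‖ + K * r) * (|σ' - σ| * ‖y - x‖) := by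
    calc |∑ j, f (γ σ t) j * ((σ' - σ) • (y - x)) j|
        ≤ n * ‖f (γ σ t)‖ * ‖(σ' - σ) • (y - x)‖ := dot_abs_le _ _
      _ ≤ n * (‖f x₀‖ + K * r) * (|σ' - σ| * ‖y - x‖) := by
          rw [norm_smul, Real.norm_eq_abs]
          have hn0 : (0:ℝ) ≤ n := Nat.cast_nonneg n
          have h1 : (0:ℝ) ≤ ‖f x₀‖ + K * r := by positivity
          have := mul_le_mul_of_nonneg_right
            (mul_le_mul_of_nonneg_left hfb hn0) (by positivity : (0:ℝ) ≤ |σ' - σ| * ‖y - x‖)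
          exact this
  calc |(∑ j, (f (γ σ' t) - f (γ σ t)) j * w σ' j)
        + ∑ j, f (γ σ t) j * ((σ' - σ) • (y - x)) j|
      ≤ |∑ j, (f (γ σ' t) - f (γ σ t)) j * w σ' j|
        + |∑ j, f (γ σ t) j * ((σ' - σ) • (y - x)) j| := abs_add_le _ _
    _ ≤ n * (K * (|σ' - σ| * ‖y - x‖)) * r + n * (‖f x₀‖ + K * r) * (|σ' - σ| * ‖y - x‖) := by
        linarith
    _ = (n * ‖y - x‖ * (K * r + (‖f x₀‖ + K * r))) * |σ' - σ| := by ring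
lemma integral01 (f : ℝ → ℝ) :
    ∫ s in (0:ℝ)..1, f s = ∫ s, f s ∂(volume.restrict (Set.Ioo (0:ℝ) 1)) := by
  rw [intervalIntegral.integral_of_le zero_le_one, ← integral_Ioc_eq_integral_Ioo]

lemma deriv_step {n : ℕ} {x₀ x y : Fin n → ℝ} {r : ℝ} (hr : 0 < r)
    {f : (Fin n → ℝ) → (Fin n → ℝ)} {K : NNReal}
    (hf : LipschitzOnWith K f (Metric.ball x₀ r))
    (hx : x ∈ Metric.ball x₀ r) (hy : y ∈ Metric.ball x₀ r) {s : ℝ}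
    (hs : s ∈ Set.Ioo (0:ℝ) 1)
    (hgood : ∀ᵐ t ∂(volume.restrict (Set.Ioo (0:ℝ) 1)),
      ∃ D : (Fin n → ℝ) →L[ℝ] (Fin n → ℝ),
        HasFDerivAt f D (x₀ + t • ((x - x₀) + s • (y - x))) ∧
        ∀ i j : Fin n, D (Pi.single i 1) j = D (Pi.single j 1) i) :
    HasDerivAt (fun σ => ∫ t, (∑ j, f (x₀ + t • ((x - x₀) + σ • (y - x))) j
        * ((x - x₀) + σ • (y - x)) j) ∂(volume.restrict (Set.Ioo (0:ℝ) 1)))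
      (∑ j, f (x + s • (y - x)) j * (y - x) j) s := by
  have hsI : s ∈ Set.Icc (0:ℝ) 1 := Set.mem_Icc_of_Ioo hs
  set μI := volume.restrict (Set.Ioo (0:ℝ) 1) with hμI
  set w : ℝ → (Fin n → ℝ) := fun σ => (x - x₀) + σ • (y - x) with hw
  set γ : ℝ → ℝ → (Fin n → ℝ) := fun σ t => x₀ + t • w σ with hγ
  set F : ℝ → ℝ → ℝ := fun σ t => ∑ j, f (γ σ t) j * w σ j with hF
  set g : ℝ → ℝ := fun σ => ∫ t, F σ t ∂μI with hg
  show HasDerivAt g _ s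
  set C₂ : ℝ := n * ‖y - x‖ * (K * r + (‖f x₀‖ + K * r)) with hC₂
  set ℓ : ℝ → ℝ := fun t => t * (∑ j, (fderiv ℝ f (γ s t) (y - x)) j * w s j)
      + ∑ j, f (γ s t) j * (y - x) j with hℓ
  -- measurability of ℓ
  have hγcont : ∀ σ : ℝ, Continuous (fun t => γ σ t) := fun σ =>
    continuous_const.add (continuous_id.smul continuous_const)
  have hγmem : ∀ σ ∈ Set.Icc (0:ℝ) 1, ∀ t ∈ Set.Icc (0:ℝ) 1, γ σ t ∈ Metric.ball x₀ r :=
    fun σ hσ t ht => gamma_mem hx hy hσ ht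
  have hmeasℓ : AEStronglyMeasurable ℓ μI := by
    have h1 : Measurable (fun t => fderiv ℝ f (γ s t) (y - x)) :=
      (measurable_fderiv_apply_const ℝ f (y - x)).comp (hγcont s).measurable
    have h2 : Measurable (fun t => t * (∑ j, (fderiv ℝ f (γ s t) (y - x)) j * w s j)) := by
      apply measurable_id.mul
      exact Finset.measurable_sum _ fun j _ =>
        ((measurable_pi_apply j).comp h1).mul measurable_const
    have h3 : ContinuousOn (fun t => ∑ j, f (γ s t) j * (y - x) j) (Set.Icc (0:ℝ) 1) :=
      pathwise_cont hf (hγcont s) (hγmem s hsI) (y - x)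
    exact (h2.aestronglyMeasurable).add
      ((h3.mono Set.Ioo_subset_Icc_self).aestronglyMeasurable measurableSet_Ioo)
  -- continuity/integrability of F σ in t
  have hFcont : ∀ σ ∈ Set.Icc (0:ℝ) 1, ContinuousOn (fun t => F σ t) (Set.Icc (0:ℝ) 1) :=
    fun σ hσ => pathwise_cont hf (hγcont σ) (hγmem σ hσ) (w σ)
  have hFint : ∀ σ ∈ Set.Icc (0:ℝ) 1, Integrable (fun t => F σ t) μI := by
    intro σ hσ
    rw [hμI]
    exact (((hFcont σ hσ).integrableOn_compact isCompact_Icc).mono_set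
      Set.Ioo_subset_Icc_self)
  -- pointwise derivative of σ ↦ F σ t
  have hptwise : ∀ t ∈ Set.Icc (0:ℝ) 1,
      ∀ D : (Fin n → ℝ) →L[ℝ] (Fin n → ℝ), HasFDerivAt f D (γ s t) →
      (∀ i j : Fin n, D (Pi.single i 1) j = D (Pi.single j 1) i) →
      HasDerivAt (fun σ => F σ t) (ℓ t) s := by
    intro t ht D hD hDsym
    have hw' : HasDerivAt w (y - x) s := by
      have h0 : HasDerivAt (fun σ : ℝ => σ • (y - x)) ((1:ℝ) • (y - x)) s :=
        (hasDerivAt_id s).smul_const (y - x)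
      rw [one_smul] at h0
      exact h0.const_add (x - x₀)
    have hγ' : HasDerivAt (fun σ => γ σ t) (t • (y - x)) s := by
      have := (hw'.const_smul t).const_add x₀
      simpa [hγ] using this
    have hfγ : HasDerivAt (fun σ => f (γ σ t)) (D (t • (y - x))) s :=
      hD.comp_hasDerivAt s hγ'
    have hsum : HasDerivAt (fun σ => F σ t)
        (∑ j, ((D (t • (y - x))) j * w s j + f (γ s t) j * (y - x) j)) s := by
      apply HasDerivAt.fun_sum
      intro j _
      have hj1 : HasDerivAt (fun σ => f (γ σ t) j) ((D (t • (y - x))) j) s :=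
        ((ContinuousLinearMap.proj j : (Fin n → ℝ) →L[ℝ] ℝ)).hasFDerivAt.comp_hasDerivAt s hfγ
      have hj2 : HasDerivAt (fun σ => w σ j) ((y - x) j) s :=
        ((ContinuousLinearMap.proj j : (Fin n → ℝ) →L[ℝ] ℝ)).hasFDerivAt.comp_hasDerivAt s hw'
      exact hj1.mul hj2
    have hval : ∑ j, ((D (t • (y - x))) j * w s j + f (γ s t) j * (y - x) j) = ℓ t := by
      have hDf : fderiv ℝ f (γ s t) = D := hD.fderiv
      simp only [hℓ, hDf, Finset.sum_add_distrib]
      congr 1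
      rw [Finset.mul_sum]
      refine Finset.sum_congr rfl fun j _ => ?_
      rw [_root_.map_smul]
      simp [smul_eq_mul]
      ring
    rwa [hval] at hsum
  have hgoodmem : ∀ᵐ t ∂μI, t ∈ Set.Ioo (0:ℝ) 1 := by
    rw [hμI]; exact ae_restrict_mem measurableSet_Ioo
  -- Step (a): derivative of g at s equals ∫ ℓ
  have hgderiv : HasDerivAt g (∫ t, ℓ t ∂μI) s := by
    rw [hasDerivAt_iff_tendsto_slope]
    have hIoo_ev : ∀ᶠ σ in nhdsWithin s {s}ᶜ, σ ∈ Set.Ioo (0:ℝ) 1 :=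
      eventually_nhdsWithin_of_eventually_nhds (isOpen_Ioo.eventually_mem hs)
    have hne_ev : ∀ᶠ σ in nhdsWithin s {s}ᶜ, σ ≠ s :=
      eventually_mem_nhdsWithin.mono (fun σ h => h)
    have hDCT : Filter.Tendsto (fun σ => ∫ t, (σ - s)⁻¹ * (F σ t - F s t) ∂μI)
        (nhdsWithin s {s}ᶜ) (nhds (∫ t, ℓ t ∂μI)) := by
      apply tendsto_integral_filter_of_dominated_convergence (fun _ => C₂) _ _
        (integrable_const _) _
      · -- measurability
        filter_upwards [hIoo_ev] with σ hσ
        have hc : ContinuousOn (fun t => (σ - s)⁻¹ * (F σ t - F s t)) (Set.Icc (0:ℝ) 1) :=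
          (((hFcont σ (Set.mem_Icc_of_Ioo hσ)).sub (hFcont s hsI)).const_smul ((σ - s)⁻¹))
        exact (hc.mono Set.Ioo_subset_Icc_self).aestronglyMeasurable measurableSet_Ioo
      · -- bound
        filter_upwards [hIoo_ev, hne_ev] with σ hσ hne
        filter_upwards [hgoodmem] with t htI
        have hFl := F_lip hr hf hx hy hsI (Set.mem_Icc_of_Ioo hσ) (Set.mem_Icc_of_Ioo htI)
        have habs : |σ - s| ≠ 0 := by
          simp only [ne_eq, abs_eq_zero, sub_eq_zero]
          exact hne
        rw [Real.norm_eq_abs, abs_mul, abs_inv]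
        rw [inv_mul_le_iff₀ (lt_of_le_of_ne (abs_nonneg _) (Ne.symm habs))]
        calc |F σ t - F s t| ≤ C₂ * |σ - s| := hFl
          _ = |σ - s| * C₂ := by ring
      · -- pointwise limit
        filter_upwards [hgood, hgoodmem] with t hDt htI
        obtain ⟨D, hD, hDsym⟩ := hDt
        have h5 := hptwise t (Set.mem_Icc_of_Ioo htI) D hD hDsym
        have := hasDerivAt_iff_tendsto_slope.mp h5
        apply this.congr'
        filter_upwards [eventually_mem_nhdsWithin] with σ hσ
        simp [slope_def_field, div_eq_inv_mul]
      -- note: argument order may need fixing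
    have hslope_eq : ∀ᶠ σ in nhdsWithin s {s}ᶜ,
        (∫ t, (σ - s)⁻¹ * (F σ t - F s t) ∂μI) = slope g s σ := by
      filter_upwards [hIoo_ev, hne_ev] with σ hσ hne
      rw [slope_def_field, hg]
      rw [integral_const_mul, integral_sub (hFint σ (Set.mem_Icc_of_Ioo hσ)) (hFint s hsI)]
      rw [div_eq_inv_mul]
    exact (hDCT.congr' hslope_eq)
  -- Step (b): identify ∫ ℓ with the RHS
  have hkey : (∫ t, ℓ t ∂μI) = ∑ j, f (x + s • (y - x)) j * (y - x) j := by
    set P : ℝ → ℝ := fun u => ∑ j, f (γ s u) j * (y - x) j with hP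
    set ψ : ℝ → ℝ := fun u => u * P u with hψ
    have hγs1 : γ s 1 = x + s • (y - x) := by
      funext i
      simp only [hγ, hw, Pi.add_apply, Pi.smul_apply, Pi.sub_apply, smul_eq_mul]
      ring
    -- ψ is Lipschitz on Icc 0 1
    have hψlip : LipschitzOnWith C₂.toNNReal ψ (Set.Icc (0:ℝ) 1) := by
      apply LipschitzOnWith.of_dist_le_mul
      intro u hu v hv
      rw [Real.dist_eq, Real.dist_eq]
      have hsplit : ψ u - ψ v = (u - v) * P u + v * (P u - P v) := by
        simp only [hψ]; ring
      have hPu : |P u| ≤ n * (‖f x₀‖ + K * r) * ‖y - x‖ := by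
        calc |P u| ≤ n * ‖f (γ s u)‖ * ‖y - x‖ := dot_abs_le _ _
          _ ≤ n * (‖f x₀‖ + K * r) * ‖y - x‖ := by
              have := f_bound hr hf (hγmem s hsI u hu)
              have hn0 : (0:ℝ) ≤ n := Nat.cast_nonneg n
              exact mul_le_mul_of_nonneg_right
                (mul_le_mul_of_nonneg_left this hn0) (norm_nonneg _)
      have hPuv : |P u - P v| ≤ n * (K * (|u - v| * r)) * ‖y - x‖ := by
        have hsplit2 : P u - P v = ∑ j, (f (γ s u) - f (γ s v)) j * (y - x) j := by
          rw [← Finset.sum_sub_distrib]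
          exact Finset.sum_congr rfl fun j _ => by
            simp only [Pi.sub_apply]; ring
        have hdist : ‖f (γ s u) - f (γ s v)‖ ≤ K * (|u - v| * r) := by
          have h1 := hf.dist_le_mul (γ s u) (hγmem s hsI u hu) (γ s v) (hγmem s hsI v hv)
          rw [dist_eq_norm, dist_eq_norm] at h1
          have heq2 : γ s u - γ s v = (u - v) • w s := by
            funext i
            simp only [hγ, Pi.sub_apply, Pi.add_apply, Pi.smul_apply, smul_eq_mul]
            ring
          have hn2 : ‖γ s u - γ s v‖ ≤ |u - v| * r := by
            rw [heq2, norm_smul, Real.norm_eq_abs]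
            exact mul_le_mul_of_nonneg_left (le_of_lt (w_norm_lt hx hy hsI)) (abs_nonneg _)
          calc ‖f (γ s u) - f (γ s v)‖ ≤ K * ‖γ s u - γ s v‖ := h1
            _ ≤ K * (|u - v| * r) := mul_le_mul_of_nonneg_left hn2 (NNReal.coe_nonneg K)
        rw [hsplit2]
        calc |∑ j, (f (γ s u) - f (γ s v)) j * (y - x) j|
            ≤ n * ‖f (γ s u) - f (γ s v)‖ * ‖y - x‖ := dot_abs_le _ _
          _ ≤ n * (K * (|u - v| * r)) * ‖y - x‖ := by
              have hn0 : (0:ℝ) ≤ n := Nat.cast_nonneg n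
              exact mul_le_mul_of_nonneg_right
                (mul_le_mul_of_nonneg_left hdist hn0) (norm_nonneg _)
      have hvb : |v| ≤ 1 := abs_le.mpr ⟨by linarith [hv.1], hv.2⟩
      have hC₂nn : (0:ℝ) ≤ C₂ := by
        rw [hC₂]; positivity
      have : |ψ u - ψ v| ≤ |u - v| * |P u| + |v| * |P u - P v| := by
        rw [hsplit]
        calc |(u - v) * P u + v * (P u - P v)| ≤ |(u - v) * P u| + |v * (P u - P v)| :=
              abs_add_le _ _
          _ = |u - v| * |P u| + |v| * |P u - P v| := by rw [abs_mul, abs_mul]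
      have hcoe : (C₂.toNNReal : ℝ) = C₂ := Real.coe_toNNReal _ hC₂nn
      rw [hcoe]
      calc |ψ u - ψ v| ≤ |u - v| * |P u| + |v| * |P u - P v| := this
        _ ≤ |u - v| * (n * (‖f x₀‖ + K * r) * ‖y - x‖)
            + 1 * (n * (K * (|u - v| * r)) * ‖y - x‖) := by
            have h1 := mul_le_mul_of_nonneg_left hPu (abs_nonneg (u - v))
            have h2 := mul_le_mul hvb hPuv (abs_nonneg _) zero_le_one
            linarith
        _ = C₂ * |u - v| := by rw [hC₂]; ring
    obtain ⟨ψ', hψ'lip, hψeq⟩ := hψlip.extend_real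
    have hψd : ∀ᵐ t ∂(volume.restrict (Set.Ioo (0:ℝ) 1)), HasDerivAt ψ' (ℓ t) t := by
      filter_upwards [hgood, hgoodmem] with t hDt htI
      obtain ⟨D, hD, hDsym⟩ := hDt
      -- derivative of P at t
      have hpath : HasDerivAt (fun u => γ s u) (w s) t := by
        have h0 : HasDerivAt (fun u : ℝ => u • w s) ((1:ℝ) • w s) t :=
          (hasDerivAt_id t).smul_const (w s)
        rw [one_smul] at h0
        exact h0.const_add x₀
      have hfP : HasDerivAt (fun u => f (γ s u)) (D (w s)) t :=
        hD.comp_hasDerivAt t hpath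
      have hPd : HasDerivAt P (∑ j, (D (w s)) j * (y - x) j) t := by
        apply HasDerivAt.fun_sum
        intro j _
        exact (((ContinuousLinearMap.proj j : (Fin n → ℝ) →L[ℝ] ℝ)).hasFDerivAt.comp_hasDerivAt
          t hfP).mul_const ((y - x) j)
      have hψd0 : HasDerivAt ψ (1 * P t + t * ∑ j, (D (w s)) j * (y - x) j) t :=
        (hasDerivAt_id t).mul hPd
      have hval : 1 * P t + t * ∑ j, (D (w s)) j * (y - x) j = ℓ t := by
        have hDf : fderiv ℝ f (γ s t) = D := hD.fderiv
        simp only [one_mul, hℓ, hP, hDf]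
        rw [sym_pair D hDsym (y - x) (w s)]
        ring
      rw [hval] at hψd0
      have heqn : ψ =ᶠ[nhds t] ψ' :=
        Filter.eventually_of_mem (Icc_mem_nhds htI.1 htI.2) (fun u hu => hψeq hu)
      exact (Filter.EventuallyEq.hasDerivAt_iff heqn).mp hψd0
    have hftc := lipschitz_ftc hψ'lip hψd
    rw [integral01 ℓ] at hftc
    rw [hμI, hftc]
    rw [← hψeq (Set.right_mem_Icc.mpr zero_le_one), ← hψeq (Set.left_mem_Icc.mpr zero_le_one)]
    simp only [hψ, one_mul, zero_mul, sub_zero, hP, hγs1]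
  rw [← hkey]
  exact hgderiv
lemma core_identity {n : ℕ} {x₀ x y : Fin n → ℝ} {r : ℝ} (hr : 0 < r)
    {f : (Fin n → ℝ) → (Fin n → ℝ)} {K : NNReal}
    (hf : LipschitzOnWith K f (Metric.ball x₀ r))
    (hx : x ∈ Metric.ball x₀ r) (hy : y ∈ Metric.ball x₀ r)
    (hgood : ∀ᵐ s ∂(volume.restrict (Set.Ioo (0:ℝ) 1)),
      ∀ᵐ t ∂(volume.restrict (Set.Ioo (0:ℝ) 1)),
      ∃ D : (Fin n → ℝ) →L[ℝ] (Fin n → ℝ),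
        HasFDerivAt f D (x₀ + t • ((x - x₀) + s • (y - x))) ∧
        ∀ i j : Fin n, D (Pi.single i 1) j = D (Pi.single j 1) i) :
    (∫ t in (0:ℝ)..1, ∑ j, f (x₀ + t • (y - x₀)) j * (y j - x₀ j))
      - (∫ t in (0:ℝ)..1, ∑ j, f (x₀ + t • (x - x₀)) j * (x j - x₀ j))
    = ∫ s in (0:ℝ)..1, ∑ j, f (x + s • (y - x)) j * (y - x) j := by
  set μI := volume.restrict (Set.Ioo (0:ℝ) 1) with hμI
  haveI : IsFiniteMeasure μI := by
    constructor
    rw [hμI, Measure.restrict_apply_univ, Real.volume_Ioo]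
    simp
  set w : ℝ → (Fin n → ℝ) := fun σ => (x - x₀) + σ • (y - x) with hw
  set γ : ℝ → ℝ → (Fin n → ℝ) := fun σ t => x₀ + t • w σ with hγ
  set F : ℝ → ℝ → ℝ := fun σ t => ∑ j, f (γ σ t) j * w σ j with hF
  set g : ℝ → ℝ := fun σ => ∫ t, F σ t ∂μI with hg
  set C₂ : ℝ := n * ‖y - x‖ * (K * r + (‖f x₀‖ + K * r)) with hC₂
  have hC₂nn : (0:ℝ) ≤ C₂ := by rw [hC₂]; positivity
  have hγcont : ∀ σ : ℝ, Continuous (fun t => γ σ t) := fun σ =>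
    continuous_const.add (continuous_id.smul continuous_const)
  have hγmem : ∀ σ ∈ Set.Icc (0:ℝ) 1, ∀ t ∈ Set.Icc (0:ℝ) 1, γ σ t ∈ Metric.ball x₀ r :=
    fun σ hσ t ht => gamma_mem hx hy hσ ht
  have hFcont : ∀ σ ∈ Set.Icc (0:ℝ) 1, ContinuousOn (fun t => F σ t) (Set.Icc (0:ℝ) 1) :=
    fun σ hσ => pathwise_cont hf (hγcont σ) (hγmem σ hσ) (w σ)
  have hFint : ∀ σ ∈ Set.Icc (0:ℝ) 1, Integrable (fun t => F σ t) μI := by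
    intro σ hσ
    rw [hμI]
    exact (((hFcont σ hσ).integrableOn_compact isCompact_Icc).mono_set
      Set.Ioo_subset_Icc_self)
  have hmemae : ∀ᵐ t ∂μI, t ∈ Set.Ioo (0:ℝ) 1 := by
    rw [hμI]; exact ae_restrict_mem measurableSet_Ioo
  -- g is Lipschitz on Icc 0 1
  have hglip : LipschitzOnWith C₂.toNNReal g (Set.Icc (0:ℝ) 1) := by
    apply LipschitzOnWith.of_dist_le_mul
    intro u hu v hv
    rw [Real.dist_eq, Real.dist_eq, Real.coe_toNNReal _ hC₂nn]
    have hdiff : g u - g v = ∫ t, (F u t - F v t) ∂μI := by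
      rw [hg]
      exact (integral_sub (hFint u hu) (hFint v hv)).symm
    rw [hdiff]
    have hb : ∀ᵐ t ∂μI, ‖F u t - F v t‖ ≤ C₂ * |u - v| := by
      filter_upwards [hmemae] with t htI
      rw [Real.norm_eq_abs]
      exact F_lip hr hf hx hy hv hu (Set.mem_Icc_of_Ioo htI)
    have := norm_integral_le_of_norm_le_const hb
    rw [Real.norm_eq_abs] at this
    calc |∫ t, (F u t - F v t) ∂μI| ≤ C₂ * |u - v| * (μI Set.univ).toReal := this
      _ = C₂ * |u - v| := by
          rw [hμI, Measure.restrict_apply_univ, Real.volume_Ioo]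
          simp
  obtain ⟨g', hg'lip, hgeq⟩ := hglip.extend_real
  have hgd : ∀ᵐ s ∂(volume.restrict (Set.Ioo (0:ℝ) 1)),
      HasDerivAt g' (∑ j, f (x + s • (y - x)) j * (y - x) j) s := by
    filter_upwards [hgood, ae_restrict_mem measurableSet_Ioo] with s hsgood hsI
    have hds := deriv_step hr hf hx hy hsI hsgood
    have heqn : g =ᶠ[nhds s] g' :=
      Filter.eventually_of_mem (Icc_mem_nhds hsI.1 hsI.2) (fun u hu => hgeq hu)
    exact (Filter.EventuallyEq.hasDerivAt_iff heqn).mp hds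
  have hftc := lipschitz_ftc hg'lip hgd
  rw [← hgeq (Set.right_mem_Icc.mpr zero_le_one), ← hgeq (Set.left_mem_Icc.mpr zero_le_one)]
    at hftc
  have hg1 : (∫ t in (0:ℝ)..1, ∑ j, f (x₀ + t • (y - x₀)) j * (y j - x₀ j)) = g 1 := by
    have hw1 : w 1 = y - x₀ := by
      funext i
      simp only [hw, Pi.add_apply, Pi.sub_apply, Pi.smul_apply, smul_eq_mul]
      ring
    rw [integral01, hg]
    apply integral_congr_ae
    filter_upwards with t
    simp only [hF, hγ, hw1, Pi.sub_apply]
  have hg0 : (∫ t in (0:ℝ)..1, ∑ j, f (x₀ + t • (x - x₀)) j * (x j - x₀ j)) = g 0 := by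
    have hw0 : w 0 = x - x₀ := by
      funext i
      simp only [hw, Pi.add_apply, Pi.sub_apply, Pi.smul_apply, smul_eq_mul]
      ring
    rw [integral01, hg]
    apply integral_congr_ae
    filter_upwards with t
    simp only [hF, hγ, hw0, Pi.sub_apply]
  rw [hg1, hg0]
  exact hftc.symm
lemma phi_lip {n : ℕ} {x₀ u v : Fin n → ℝ} {r : ℝ} (hr : 0 < r)
    {f : (Fin n → ℝ) → (Fin n → ℝ)} {K : NNReal}
    (hf : LipschitzOnWith K f (Metric.ball x₀ r))
    (hu : u ∈ Metric.ball x₀ r) (hv : v ∈ Metric.ball x₀ r) :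
    |(∫ t in (0:ℝ)..1, ∑ j, f (x₀ + t • (u - x₀)) j * (u j - x₀ j))
      - (∫ t in (0:ℝ)..1, ∑ j, f (x₀ + t • (v - x₀)) j * (v j - x₀ j))|
    ≤ n * ‖u - v‖ * (K * r + (‖f x₀‖ + K * r)) := by
  have hA : (v - x₀) + (1:ℝ) • (u - v) = u - x₀ := by
    funext i; simp only [Pi.add_apply, Pi.sub_apply, Pi.smul_apply, smul_eq_mul]; ring
  have hB : (v - x₀) + (0:ℝ) • (u - v) = v - x₀ := by
    funext i; simp only [Pi.add_apply, Pi.sub_apply, Pi.smul_apply, smul_eq_mul]; ring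
  have hFl : ∀ t ∈ Set.Icc (0:ℝ) 1,
      |(∑ j, f (x₀ + t • (u - x₀)) j * (u j - x₀ j))
        - (∑ j, f (x₀ + t • (v - x₀)) j * (v j - x₀ j))|
      ≤ n * ‖u - v‖ * (K * r + (‖f x₀‖ + K * r)) := by
    intro t ht
    have h0 : (0:ℝ) ∈ Set.Icc (0:ℝ) 1 := Set.left_mem_Icc.mpr zero_le_one
    have h1 : (1:ℝ) ∈ Set.Icc (0:ℝ) 1 := Set.right_mem_Icc.mpr zero_le_one
    have := F_lip (x := v) (y := u) hr hf hv hu h0 h1 ht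
    rw [hA, hB] at this
    simp only [Pi.sub_apply] at this
    calc |(∑ j, f (x₀ + t • (u - x₀)) j * (u j - x₀ j))
        - (∑ j, f (x₀ + t • (v - x₀)) j * (v j - x₀ j))|
        ≤ n * ‖u - v‖ * (K * r + (‖f x₀‖ + K * r)) * |1 - 0| := this
      _ = n * ‖u - v‖ * (K * r + (‖f x₀‖ + K * r)) := by norm_num
  have hmemu : ∀ t ∈ Set.Icc (0:ℝ) 1, x₀ + t • (u - x₀) ∈ Metric.ball x₀ r := by
    intro t ht
    refine scaled_mem_ball le_rfl ?_ ht
    rw [← dist_eq_norm]; exact Metric.mem_ball.mp hu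
  have hmemv : ∀ t ∈ Set.Icc (0:ℝ) 1, x₀ + t • (v - x₀) ∈ Metric.ball x₀ r := by
    intro t ht
    refine scaled_mem_ball le_rfl ?_ ht
    rw [← dist_eq_norm]; exact Metric.mem_ball.mp hv
  have hcu : ContinuousOn (fun t => ∑ j, f (x₀ + t • (u - x₀)) j * (u j - x₀ j))
      (Set.Icc (0:ℝ) 1) := by
    have := pathwise_cont hf (p := fun t => x₀ + t • (u - x₀))
      (continuous_const.add (continuous_id.smul continuous_const)) hmemu (u - x₀)
    simpa only [Pi.sub_apply] using this
  have hcv : ContinuousOn (fun t => ∑ j, f (x₀ + t • (v - x₀)) j * (v j - x₀ j))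
      (Set.Icc (0:ℝ) 1) := by
    have := pathwise_cont hf (p := fun t => x₀ + t • (v - x₀))
      (continuous_const.add (continuous_id.smul continuous_const)) hmemv (v - x₀)
    simpa only [Pi.sub_apply] using this
  have hiu : IntervalIntegrable (fun t => ∑ j, f (x₀ + t • (u - x₀)) j * (u j - x₀ j))
      volume 0 1 := (hcu.mono (by rw [Set.uIcc_of_le zero_le_one])).intervalIntegrable
  have hiv : IntervalIntegrable (fun t => ∑ j, f (x₀ + t • (v - x₀)) j * (v j - x₀ j))
      volume 0 1 := (hcv.mono (by rw [Set.uIcc_of_le zero_le_one])).intervalIntegrable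
  rw [← intervalIntegral.integral_sub hiu hiv]
  have := intervalIntegral.norm_integral_le_of_norm_le_const
    (C := n * ‖u - v‖ * (K * r + (‖f x₀‖ + K * r)))
    (f := fun t => (∑ j, f (x₀ + t • (u - x₀)) j * (u j - x₀ j))
      - ∑ j, f (x₀ + t • (v - x₀)) j * (v j - x₀ j)) (a := 0) (b := 1) ?_
  · rw [Real.norm_eq_abs] at this
    calc |∫ t in (0:ℝ)..1, ((∑ j, f (x₀ + t • (u - x₀)) j * (u j - x₀ j))
          - ∑ j, f (x₀ + t • (v - x₀)) j * (v j - x₀ j))|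
        ≤ n * ‖u - v‖ * (K * r + (‖f x₀‖ + K * r)) * |1 - 0| := this
      _ = n * ‖u - v‖ * (K * r + (‖f x₀‖ + K * r)) := by norm_num
  · intro t ht
    rw [Set.uIoc_of_le zero_le_one] at ht
    exact hFl t (Set.mem_Icc_of_Ioc ht)
theorem statement8 {n : ℕ} (hn : 1 ≤ n) (x₀ : Fin n → ℝ) (r : ℝ) (hr : 0 < r)
    (f : (Fin n → ℝ) → (Fin n → ℝ)) (K : NNReal)
    (hf : LipschitzOnWith K f (Metric.ball x₀ r))
    (hsym : ∀ᵐ x ∂(volume.restrict (Metric.ball x₀ r)),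
      ∃ D : (Fin n → ℝ) →L[ℝ] (Fin n → ℝ), HasFDerivAt f D x ∧
        ∀ i j : Fin n, D (Pi.single i 1) j = D (Pi.single j 1) i)
    (φ : (Fin n → ℝ) → ℝ)
    (hφ : ∀ x, φ x =
      ∫ t in (0:ℝ)..1, ∑ j : Fin n, f (x₀ + t • (x - x₀)) j * (x j - x₀ j)) :
    ∀ x ∈ Metric.ball x₀ r, DifferentiableAt ℝ φ x ∧
      ∀ j : Fin n, fderiv ℝ φ x (Pi.single j 1) = f x j := by
  intro x hx
  set B := Metric.ball x₀ r with hB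
  -- the set of symmetric-differentiability points
  set E : Set (Fin n → ℝ) := {z | DifferentiableAt ℝ f z ∧
    ∀ i j : Fin n, fderiv ℝ f z (Pi.single i 1) j = fderiv ℝ f z (Pi.single j 1) i} with hEdef
  have hEmeas : MeasurableSet E := by
    have hE2 : E = {z | DifferentiableAt ℝ f z} ∩
        ⋂ i, ⋂ j, {z | fderiv ℝ f z (Pi.single i 1) j = fderiv ℝ f z (Pi.single j 1) i} := by
      ext z
      simp only [hEdef, Set.mem_inter_iff, Set.mem_iInter, Set.mem_setOf_eq]
    rw [hE2]
    refine (measurableSet_of_differentiableAt ℝ f).inter ?_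
    refine MeasurableSet.iInter fun i => MeasurableSet.iInter fun j => ?_
    exact measurableSet_eq_fun
      ((measurable_pi_apply j).comp (measurable_fderiv_apply_const ℝ f (Pi.single i 1)))
      ((measurable_pi_apply i).comp (measurable_fderiv_apply_const ℝ f (Pi.single j 1)))
  have hEfull : volume (B \ E) = 0 := by
    have hae : ∀ᵐ z ∂(volume.restrict B), z ∈ E := by
      filter_upwards [hsym] with z hz
      obtain ⟨D, hD, hDsym⟩ := hz
      refine ⟨hD.differentiableAt, ?_⟩
      rw [hD.fderiv]
      exact hDsym
    have h0 : (volume.restrict B) Eᶜ = 0 := by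
      rw [ae_iff] at hae
      convert hae using 2
      rfl
    rw [Measure.restrict_apply hEmeas.compl] at h0
    rw [Set.diff_eq, Set.inter_comm]
    exact h0
  have hgoodae := ae_good x₀ x hr hx hEmeas hEfull
  -- a.e. quadratic bound
  have hQae : ∀ᵐ y ∂(volume.restrict B), y ∈ B ∧
      |φ y - φ x - ∑ j, f x j * (y j - x j)| ≤ (n * K) * ‖y - x‖^2 := by
    filter_upwards [ae_restrict_mem Metric.isOpen_ball.measurableSet, hgoodae] with y hyB hygood
    refine ⟨hyB, ?_⟩
    have hgood' : ∀ᵐ s ∂(volume.restrict (Set.Ioo (0:ℝ) 1)),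
        ∀ᵐ t ∂(volume.restrict (Set.Ioo (0:ℝ) 1)),
        ∃ D : (Fin n → ℝ) →L[ℝ] (Fin n → ℝ),
          HasFDerivAt f D (x₀ + t • ((x - x₀) + s • (y - x))) ∧
          ∀ i j : Fin n, D (Pi.single i 1) j = D (Pi.single j 1) i := by
      filter_upwards [hygood] with s hs
      filter_upwards [hs] with t ht
      exact ⟨fderiv ℝ f _, ht.1.hasFDerivAt, ht.2⟩
    have hci := core_identity hr hf hx hyB hgood'
    rw [← hφ y, ← hφ x] at hci
    -- estimate the RHS integral
    have hpath : ∀ s ∈ Set.Icc (0:ℝ) 1, x + s • (y - x) ∈ B := fun s hs =>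
      comb_mem_ball hx hyB hs
    have hcont : ContinuousOn (fun s => ∑ j, f (x + s • (y - x)) j * (y - x) j)
        (Set.Icc (0:ℝ) 1) :=
      pathwise_cont hf (continuous_const.add (continuous_id.smul continuous_const))
        hpath (y - x)
    have hint : IntervalIntegrable (fun s => ∑ j, f (x + s • (y - x)) j * (y - x) j)
        volume 0 1 := (hcont.mono (by rw [Set.uIcc_of_le zero_le_one])).intervalIntegrable
    have hconst : (∑ j, f x j * (y j - x j))
        = ∫ _s in (0:ℝ)..1, ∑ j, f x j * (y - x) j := by
      rw [intervalIntegral.integral_const]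
      simp only [sub_zero, one_smul]
      exact Finset.sum_congr rfl fun j _ => by rw [Pi.sub_apply]
    rw [hci, hconst, ← intervalIntegral.integral_sub hint intervalIntegrable_const]
    have hbnd : ∀ s ∈ Set.uIoc (0:ℝ) 1,
        ‖(∑ j, f (x + s • (y - x)) j * (y - x) j) - ∑ j, f x j * (y - x) j‖
        ≤ (n * K) * ‖y - x‖^2 := by
      intro s hs
      rw [Set.uIoc_of_le zero_le_one] at hs
      have hsI : s ∈ Set.Icc (0:ℝ) 1 := Set.mem_Icc_of_Ioc hs
      have hsplit : (∑ j, f (x + s • (y - x)) j * (y - x) j) - ∑ j, f x j * (y - x) j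
          = ∑ j, (f (x + s • (y - x)) - f x) j * (y - x) j := by
        rw [← Finset.sum_sub_distrib]
        exact Finset.sum_congr rfl fun j _ => by simp only [Pi.sub_apply]; ring
      rw [Real.norm_eq_abs, hsplit]
      have hdist : ‖f (x + s • (y - x)) - f x‖ ≤ K * ‖y - x‖ := by
        have h1 := hf.dist_le_mul (x + s • (y - x)) (hpath s hsI) x hx
        rw [dist_eq_norm, dist_eq_norm] at h1
        have h2 : x + s • (y - x) - x = s • (y - x) := by
          funext i; simp only [Pi.add_apply, Pi.sub_apply, Pi.smul_apply, smul_eq_mul]; ring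
        rw [h2, norm_smul, Real.norm_eq_abs] at h1
        calc ‖f (x + s • (y - x)) - f x‖ ≤ K * (|s| * ‖y - x‖) := h1
          _ ≤ K * ‖y - x‖ := by
              have habs : |s| ≤ 1 := abs_le.mpr ⟨by linarith [hsI.1], hsI.2⟩
              have := mul_le_mul_of_nonneg_right habs (norm_nonneg (y - x))
              rw [one_mul] at this
              exact mul_le_mul_of_nonneg_left this (NNReal.coe_nonneg K)
      calc |∑ j, (f (x + s • (y - x)) - f x) j * (y - x) j|
          ≤ n * ‖f (x + s • (y - x)) - f x‖ * ‖y - x‖ := dot_abs_le _ _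
        _ ≤ n * (K * ‖y - x‖) * ‖y - x‖ := by
            have hn0 : (0:ℝ) ≤ n := Nat.cast_nonneg n
            exact mul_le_mul_of_nonneg_right
              (mul_le_mul_of_nonneg_left hdist hn0) (norm_nonneg _)
        _ = (n * K) * ‖y - x‖^2 := by ring
    have := intervalIntegral.norm_integral_le_of_norm_le_const hbnd
    rw [Real.norm_eq_abs] at this
    calc |∫ s in (0:ℝ)..1, ((∑ j, f (x + s • (y - x)) j * (y - x) j)
          - ∑ j, f x j * (y - x) j)| ≤ (n * K) * ‖y - x‖^2 * |1 - 0| := this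
      _ = (n * K) * ‖y - x‖^2 := by norm_num
  -- extend the bound to all y in B by density
  have key : ∀ y ∈ B, |φ y - φ x - ∑ j, f x j * (y j - x j)| ≤ (n * K) * ‖y - x‖^2 := by
    intro y hyB
    have hsel : ∀ k : ℕ, ∃ y' : Fin n → ℝ, (y' ∈ B ∧
        |φ y' - φ x - ∑ j, f x j * (y' j - x j)| ≤ (n * K) * ‖y' - x‖^2) ∧
        dist y' y < 1/((k:ℝ)+1) := by
      intro k
      set δ : ℝ := min (1/((k:ℝ)+1)) (r - dist y x₀) with hδ
      have hyr : dist y x₀ < r := Metric.mem_ball.mp hyB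
      have hδpos : 0 < δ := lt_min (by positivity) (by linarith)
      have hδle : δ ≤ 1/((k:ℝ)+1) := min_le_left _ _
      have hδle2 : δ ≤ r - dist y x₀ := min_le_right _ _
      have hsub : Metric.ball y δ ⊆ B := by
        intro z hz
        rw [hB, Metric.mem_ball]
        calc dist z x₀ ≤ dist z y + dist y x₀ := dist_triangle _ _ _
          _ < δ + dist y x₀ := by linarith [Metric.mem_ball.mp hz]
          _ ≤ r := by linarith
      by_contra hcon
      push_neg at hcon
      have hbad : Metric.ball y δ ⊆ {y' | ¬ (y' ∈ B ∧
          |φ y' - φ x - ∑ j, f x j * (y' j - x j)| ≤ (n * K) * ‖y' - x‖^2)} := by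
        intro z hz
        intro hgood2
        exact absurd (lt_of_lt_of_le (Metric.mem_ball.mp hz) hδle)
          (not_lt.mpr (hcon z hgood2))
      have h0 : (volume.restrict B) {y' | ¬ (y' ∈ B ∧
          |φ y' - φ x - ∑ j, f x j * (y' j - x j)| ≤ (n * K) * ‖y' - x‖^2)} = 0 := by
        rw [ae_iff] at hQae
        exact hQae
      have h1 : (volume.restrict B) (Metric.ball y δ) = 0 :=
        le_antisymm (h0 ▸ measure_mono hbad) zero_le
      have h2 : (volume.restrict B) (Metric.ball y δ) = volume (Metric.ball y δ) := by
        rw [Measure.restrict_apply Metric.isOpen_ball.measurableSet,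
          Set.inter_eq_self_of_subset_left hsub]
      have h3 : 0 < volume (Metric.ball y δ) := Metric.measure_ball_pos volume y hδpos
      rw [h2] at h1
      exact absurd h1 (ne_of_gt h3)
    choose Y hY using hsel
    have htend : Filter.Tendsto Y Filter.atTop (nhds y) := by
      rw [tendsto_iff_dist_tendsto_zero]
      apply squeeze_zero (fun k => dist_nonneg) (fun k => le_of_lt (hY k).2)
      exact tendsto_one_div_add_atTop_nhds_zero_nat
    have hdtend : Filter.Tendsto (fun k => dist (Y k) y) Filter.atTop (nhds 0) :=
      tendsto_iff_dist_tendsto_zero.mp htend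
    have hφtend : Filter.Tendsto (fun k => φ (Y k)) Filter.atTop (nhds (φ y)) := by
      rw [tendsto_iff_dist_tendsto_zero]
      have hbd : ∀ k, dist (φ (Y k)) (φ y)
          ≤ (n * ((K:ℝ)*r + (‖f x₀‖ + K*r))) * dist (Y k) y := by
        intro k
        rw [Real.dist_eq, hφ (Y k), hφ y, dist_eq_norm]
        calc |(∫ t in (0:ℝ)..1, ∑ j, f (x₀ + t • (Y k - x₀)) j * (Y k j - x₀ j))
            - (∫ t in (0:ℝ)..1, ∑ j, f (x₀ + t • (y - x₀)) j * (y j - x₀ j))|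
            ≤ n * ‖Y k - y‖ * ((K:ℝ)*r + (‖f x₀‖ + K*r)) :=
              phi_lip hr hf (hY k).1.1 hyB
          _ = (n * ((K:ℝ)*r + (‖f x₀‖ + K*r))) * ‖Y k - y‖ := by ring
      apply squeeze_zero (fun k => dist_nonneg) hbd
      have := hdtend.const_mul ((n:ℝ) * ((K:ℝ)*r + (‖f x₀‖ + K*r)))
      simpa using this
    have hLtend : Filter.Tendsto (fun k => ∑ j, f x j * (Y k j - x j)) Filter.atTop
        (nhds (∑ j, f x j * (y j - x j))) := by
      apply tendsto_finset_sum
      intro j _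
      exact ((((continuous_apply j).tendsto y).comp htend).sub_const (x j)).const_mul (f x j)
    have hlhs : Filter.Tendsto (fun k => |φ (Y k) - φ x - ∑ j, f x j * (Y k j - x j)|)
        Filter.atTop (nhds (|φ y - φ x - ∑ j, f x j * (y j - x j)|)) :=
      ((hφtend.sub_const (φ x)).sub hLtend).abs
    have hrhs : Filter.Tendsto (fun k => ((n:ℝ) * K) * ‖Y k - x‖^2) Filter.atTop
        (nhds (((n:ℝ) * K) * ‖y - x‖^2)) := by
      have h1 : Filter.Tendsto (fun k => Y k - x) Filter.atTop (nhds (y - x)) :=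
        htend.sub_const x
      exact ((h1.norm).pow 2).const_mul _
    exact le_of_tendsto_of_tendsto' hlhs hrhs (fun k => (hY k).1.2)
  -- the candidate derivative
  set L : (Fin n → ℝ) →L[ℝ] ℝ :=
    ∑ j, (f x j) • (ContinuousLinearMap.proj j : (Fin n → ℝ) →L[ℝ] ℝ) with hL
  have hLval : ∀ v : Fin n → ℝ, L v = ∑ j, f x j * v j := by
    intro v
    rw [hL, ContinuousLinearMap.sum_apply]
    exact Finset.sum_congr rfl fun j _ => by
      rw [ContinuousLinearMap.smul_apply, ContinuousLinearMap.proj_apply, smul_eq_mul]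
  have hDer : HasFDerivAt φ L x := by
    rw [hasFDerivAt_iff_isLittleO_nhds_zero]
    rw [Asymptotics.isLittleO_iff]
    intro c hc
    set a : ℝ := (n : ℝ) * K with ha
    have ha0 : 0 ≤ a := by positivity
    have hev1 : ∀ᶠ h : Fin n → ℝ in nhds 0, x + h ∈ B := by
      have hcont : Continuous (fun h : Fin n → ℝ => x + h) :=
        continuous_const.add continuous_id
      have : (fun h : Fin n → ℝ => x + h) ⁻¹' B ∈ nhds 0 := by
        apply hcont.continuousAt.preimage_mem_nhds
        simp only [add_zero]
        exact Metric.isOpen_ball.mem_nhds hx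
      filter_upwards [this] with h hh using hh
    have hev2 : ∀ᶠ h : Fin n → ℝ in nhds 0, ‖h‖ < c/(a+1) := by
      have : 0 < c/(a+1) := by positivity
      filter_upwards [Metric.ball_mem_nhds 0 this] with h hh
      simpa [dist_eq_norm] using hh
    filter_upwards [hev1, hev2] with h hhB hhn
    have hkey := key (x + h) hhB
    have he1 : (x + h) - x = h := by funext i; simp
    have he2 : ∀ j, (x + h) j - x j = h j := fun j => by simp
    rw [he1] at hkey
    simp only [he2] at hkey
    rw [Real.norm_eq_abs, hLval]
    calc |φ (x + h) - φ x - ∑ j, f x j * h j| ≤ a * ‖h‖^2 := hkey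
      _ ≤ c * ‖h‖ := by
          rw [pow_two, ← mul_assoc]
          have h1 : a * ‖h‖ ≤ a * (c/(a+1)) := by
            exact mul_le_mul_of_nonneg_left (le_of_lt hhn) ha0
          have h2 : a * (c/(a+1)) ≤ c := by
            rw [div_eq_inv_mul, ← mul_assoc]
            rw [mul_comm a (a+1)⁻¹, mul_assoc]
            have : (a+1)⁻¹ * (a * c) ≤ (a+1)⁻¹ * ((a+1) * c) := by
              apply mul_le_mul_of_nonneg_left _ (by positivity)
              nlinarith
            calc (a+1)⁻¹ * (a * c) ≤ (a+1)⁻¹ * ((a+1) * c) := this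
              _ = c := by field_simp
          exact mul_le_mul_of_nonneg_right (le_trans h1 h2) (norm_nonneg h)
  refine ⟨hDer.differentiableAt, fun j => ?_⟩
  rw [hDer.fderiv, hLval]
  simp [Pi.single_apply]
end

section
/- Let n ≥ 1, let Ω ⊆ ℝⁿ be open, let A : Ω → ℝⁿ be a continuous vector field, and let G : Ω → ℂ be differentiable on Ω with |G(x)| = 1 for all x ∈ Ω and ∂_j G(x) = i A_j(x) G(x) for all x ∈ Ω and all j. Let γ : ℝ → ℝⁿ be continuously differentiable on [0,1] with γ(t) ∈ Ω for all t ∈ [0,1] and γ(0) = γ(1). Then there exists an integer m ∈ ℤ such that ∫₀¹ ⟨ A(γ(t)), γ'(t) ⟩ dt = 2π m. -/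
open MeasureTheory Complex

theorem statement11 {n : ℕ} (hn : 1 ≤ n) (Ω : Set (Fin n → ℝ)) (hΩ : IsOpen Ω)
    (A : (Fin n → ℝ) → (Fin n → ℝ)) (hA : ContinuousOn A Ω)
    (G : (Fin n → ℝ) → ℂ)
    (hG1 : ∀ x ∈ Ω, DifferentiableAt ℝ G x)
    (hGabs : ∀ x ∈ Ω, ‖G x‖ = 1)
    (hGd : ∀ x ∈ Ω, ∀ j : Fin n, pd G j x = Complex.I * (A x j : ℂ) * G x)
    (γ γ' : ℝ → (Fin n → ℝ))
    (hγmem : ∀ t ∈ Set.Icc (0:ℝ) 1, γ t ∈ Ω)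
    (hγd : ∀ t ∈ Set.Icc (0:ℝ) 1, HasDerivAt γ (γ' t) t)
    (hγ'c : ContinuousOn γ' (Set.Icc (0:ℝ) 1))
    (hloop : γ 0 = γ 1) :
    ∃ m : ℤ, (∫ t in (0:ℝ)..1, ∑ j : Fin n, A (γ t) j * γ' t j) = 2 * Real.pi * m := by
  set φ : ℝ → ℝ := fun t => ∑ j : Fin n, A (γ t) j * γ' t j with hφdef
  have hγc : ContinuousOn γ (Set.Icc (0:ℝ) 1) :=
    fun t ht => (hγd t ht).continuousAt.continuousWithinAt
  have hφc : ContinuousOn φ (Set.Icc (0:ℝ) 1) := by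
    apply continuousOn_finset_sum
    intro j _
    exact (((continuous_apply j).comp_continuousOn (hA.comp hγc hγmem)).mul
      ((continuous_apply j).comp_continuousOn hγ'c))
  -- continuous extension of φ to all of ℝ
  set ψ : ℝ → ℝ := fun t => φ (Set.projIcc (0:ℝ) 1 zero_le_one t) with hψdef
  have hψc : Continuous ψ :=
    hφc.comp_continuous (continuous_subtype_val.comp continuous_projIcc) (fun t => (Set.projIcc 0 1 zero_le_one t).2)
  have hψφ : ∀ t ∈ Set.Icc (0:ℝ) 1, ψ t = φ t := by
    intro t ht
    simp [hψdef, Set.projIcc_of_mem zero_le_one ht]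
  set F : ℝ → ℝ := fun u => ∫ s in (0:ℝ)..u, ψ s with hFdef
  have hFd : ∀ t : ℝ, HasDerivAt F (ψ t) t := fun t =>
    (hψc.integral_hasStrictDerivAt 0 t).hasDerivAt
  -- the comparison function
  set h : ℝ → ℂ := fun t => G (γ t) * Complex.exp (-(Complex.I * (F t : ℂ))) with hhdef
  have hhd : ∀ t ∈ Set.Icc (0:ℝ) 1, HasDerivAt h 0 t := by
    intro t ht
    have hmem := hγmem t ht
    have hGγ : HasDerivAt (fun s => G (γ s))
        ((fderiv ℝ G (γ t)) (γ' t)) t :=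
      (hG1 _ hmem).hasFDerivAt.comp_hasDerivAt t (hγd t ht)
    have key : (fderiv ℝ G (γ t)) (γ' t) = Complex.I * (φ t : ℂ) * G (γ t) := by
      have h1 : γ' t = ∑ j : Fin n, Pi.single j (γ' t j) :=
        (Finset.univ_sum_single (γ' t)).symm
      rw [h1, map_sum]
      have : ∀ j : Fin n, (fderiv ℝ G (γ t)) (Pi.single j (γ' t j))
          = (γ' t j : ℂ) * (Complex.I * (A (γ t) j : ℂ) * G (γ t)) := by
        intro j
        have hsingle : Pi.single j (γ' t j) = (γ' t j) • Pi.single (M := fun _ : Fin n => ℝ) j 1 := by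
          rw [← Pi.single_smul, smul_eq_mul, mul_one]
        rw [hsingle, (fderiv ℝ G (γ t)).map_smul]
        have := hGd _ hmem j
        rw [pd] at this
        rw [this]
        simp [smul_eq_mul]
      simp only [this]
      push_cast [hφdef]
      rw [Finset.mul_sum, Finset.sum_mul]
      exact Finset.sum_congr rfl fun j _ => by ring
    have hexp : HasDerivAt (fun s => Complex.exp (-(Complex.I * (F s : ℂ))))
        ((-(Complex.I * (ψ t : ℂ))) * Complex.exp (-(Complex.I * (F t : ℂ)))) t := by
      have hF : HasDerivAt (fun s => -(Complex.I * (F s : ℂ)))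
          (-(Complex.I * (ψ t : ℂ))) t := by
        have : HasDerivAt (fun s => ((F s : ℝ) : ℂ)) ((ψ t : ℂ)) t :=
          (Complex.ofRealCLM.hasFDerivAt.comp_hasDerivAt t (hFd t))
        exact ((this.const_mul Complex.I).neg)
      simpa [mul_comm] using hF.cexp
    have := (hGγ.mul hexp)
    rw [key, hψφ t ht] at this
    convert this using 1
    case e'_9 => ring
    all_goals rfl
  have hhc : ContinuousOn h (Set.Icc (0:ℝ) 1) :=
    fun t ht => (hhd t ht).continuousAt.continuousWithinAt
  have hconst : h 1 = h 0 :=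
    constant_of_has_deriv_right_zero hhc
      (fun t ht => ((hhd t (Set.mem_Icc_of_Ico ht)).hasDerivWithinAt)) 1
      (Set.right_mem_Icc.mpr zero_le_one)
  have hG0 : G (γ 0) ≠ 0 := by
    intro h0
    have := hGabs _ (hγmem 0 (Set.left_mem_Icc.mpr zero_le_one))
    rw [h0] at this; simp at this
  have hF0 : F 0 = 0 := by simp [hFdef]
  have hexp1 : Complex.exp (-(Complex.I * (F 1 : ℂ))) = 1 := by
    have heq : G (γ 1) * Complex.exp (-(Complex.I * (F 1 : ℂ))) = G (γ 1) * 1 := by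
      simpa [hhdef, hF0, hloop] using hconst
    rw [hloop] at hG0
    exact mul_left_cancel₀ hG0 heq
  obtain ⟨m, hm⟩ := Complex.exp_eq_one_iff.mp hexp1
  refine ⟨-m, ?_⟩
  have hint : (∫ t in (0:ℝ)..1, φ t) = F 1 := by
    rw [hFdef]
    exact (intervalIntegral.integral_congr (fun t ht => by
      rw [hψφ t (by rwa [Set.uIcc_of_le zero_le_one] at ht)])).symm
  have : ((F 1 : ℝ) : ℂ) = ((2 * Real.pi * (-m : ℤ) : ℝ) : ℂ) := by
    have hI : (Complex.I : ℂ) ≠ 0 := Complex.I_ne_zero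
    field_simp at hm ⊢
    have : Complex.I * (F 1 : ℂ) = Complex.I * (-(m : ℂ) * (2 * Real.pi)) := by
      linear_combination -Complex.I * hm
    have := mul_left_cancel₀ hI this
    rw [this]; push_cast; ring
  have hF1 : F 1 = 2 * Real.pi * (-m : ℤ) := by exact_mod_cast this
  rw [hint, hF1]
end

section
/- Let n ≥ 1, let Ω ⊆ ℝⁿ be open, let A = (A₁,…,Aₙ) : Ω → ℝⁿ be a C¹ vector field, and let G : Ω → ℂ be twice differentiable on Ω with |G(x)| = 1 for all x ∈ Ω. Suppose that for every u ∈ C_c^∞(Ω;ℂ) and every x ∈ Ω, −Δ(G·u)(x) = G(x) · (H^A u)(x). Then ∂_j G(x) = i A_j(x) G(x) for all x ∈ Ω and all j; that is, the multiplication operator by G intertwines the free Laplacian with the magnetic Schrödinger operator only if G is a gauge function whose logarithmic gradient equals iA. -/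
open MeasureTheory Complex

open Filter Topology in
private lemma pd_eq_of_eventuallyEq {n : ℕ} {u v : (Fin n → ℝ) → ℂ} {x : Fin n → ℝ}
    (h : u =ᶠ[nhds x] v) (j : Fin n) : pd u j x = pd v j x := by
  simp [pd, h.fderiv_eq]

private lemma pd_congr {n : ℕ} {u v : (Fin n → ℝ) → ℂ} {x : Fin n → ℝ}
    (h : u =ᶠ[nhds x] v) (j : Fin n) : pd u j =ᶠ[nhds x] pd v j := by
  filter_upwards [h.fderiv (𝕜 := ℝ)] with y hy
  simp [pd, hy]

private lemma lap_congr {n : ℕ} {u v : (Fin n → ℝ) → ℂ} {x : Fin n → ℝ}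
    (h : u =ᶠ[nhds x] v) : lap u x = lap v x := by
  unfold lap
  exact Finset.sum_congr rfl fun j _ => pd_eq_of_eventuallyEq (pd_congr h j) j

private lemma pd_mul {n : ℕ} {f g : (Fin n → ℝ) → ℂ} {x : Fin n → ℝ}
    (hf : DifferentiableAt ℝ f x) (hg : DifferentiableAt ℝ g x) (j : Fin n) :
    pd (fun y => f y * g y) j x = f x * pd g j x + g x * pd f j x := by
  simp [pd, fderiv_fun_mul hf hg]

private lemma pd_add {n : ℕ} {f g : (Fin n → ℝ) → ℂ} {x : Fin n → ℝ}
    (hf : DifferentiableAt ℝ f x) (hg : DifferentiableAt ℝ g x) (j : Fin n) :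
    pd (fun y => f y + g y) j x = pd f j x + pd g j x := by
  simp [pd, fderiv_fun_add hf hg]

private lemma pd_mul_const {n : ℕ} {f : (Fin n → ℝ) → ℂ} {c : ℂ} {x : Fin n → ℝ}
    (hf : DifferentiableAt ℝ f x) (j : Fin n) :
    pd (fun y => f y * c) j x = pd f j x * c := by
  simp [pd, fderiv_mul_const hf]
  ring

theorem statement13 {n : ℕ} (hn : 1 ≤ n) (Ω : Set (Fin n → ℝ)) (hΩ : IsOpen Ω)
    (A : (Fin n → ℝ) → (Fin n → ℝ)) (hA : ContDiffOn ℝ 1 A Ω)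
    (G : (Fin n → ℝ) → ℂ)
    (hG1 : ∀ x ∈ Ω, DifferentiableAt ℝ G x)
    (hG2 : ∀ j : Fin n, ∀ x ∈ Ω, DifferentiableAt ℝ (pd G j) x)
    (hGabs : ∀ x ∈ Ω, ‖G x‖ = 1)
    (hint : ∀ u : (Fin n → ℝ) → ℂ, ContDiff ℝ (⊤ : ℕ∞) u → HasCompactSupport u →
      tsupport u ⊆ Ω → ∀ x ∈ Ω,
        - lap (fun y => G y * u y) x = G x * magOp A u x) :
    ∀ x ∈ Ω, ∀ j : Fin n, pd G j x = Complex.I * (A x j : ℂ) * G x := by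
  intro x hx k
  obtain ⟨ε, εpos, hball⟩ := Metric.isOpen_iff.mp hΩ x hx
  set φ : ContDiffBump x := ⟨ε/2, 3*ε/4, by positivity, by linarith⟩ with hφ
  set L : (Fin n → ℝ) →L[ℝ] ℂ :=
    Complex.ofRealCLM.comp (ContinuousLinearMap.proj k) with hLdef
  set v : (Fin n → ℝ) → ℂ := fun y => L y - (x k : ℂ) with hvdef
  set u : (Fin n → ℝ) → ℂ := fun y => v y * (φ y : ℂ) with hudef
  have hvdiff : Differentiable ℝ v := L.differentiable.sub_const _
  have hvx : v x = 0 := by simp [hvdef, hLdef]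
  have hfv : ∀ y, fderiv ℝ v y = L := by
    intro y
    rw [hvdef]
    rw [fderiv_sub_const]
    exact L.fderiv
  have pdv : ∀ j y, pd v j y = ((Pi.single j 1 : Fin n → ℝ) k : ℂ) := by
    intro j y
    simp [pd, hfv, hLdef]
  have huv : u =ᶠ[nhds x] v := by
    filter_upwards [Metric.ball_mem_nhds x (by positivity : (0:ℝ) < ε/2)] with y hy
    have h1 : φ y = 1 := φ.one_of_mem_closedBall (Metric.ball_subset_closedBall hy)
    simp [hudef, h1]
  have usmooth : ContDiff ℝ (⊤ : ℕ∞) u :=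
    (L.contDiff.sub contDiff_const).mul (Complex.ofRealCLM.contDiff.comp φ.contDiff)
  have ucs : HasCompactSupport u := by
    apply HasCompactSupport.intro (isCompact_closedBall x (3*ε/4))
    intro y hy
    have h0 : φ y = 0 := by
      apply φ.zero_of_le_dist
      simp only [Metric.mem_closedBall, not_le] at hy
      exact le_of_lt hy
    show v y * (φ y : ℂ) = 0
    rw [h0]
    norm_num
  have usupp : tsupport u ⊆ Ω := by
    have h1 : tsupport u ⊆ Metric.closedBall x (3*ε/4) := by
      rw [← φ.tsupport_eq]
      apply closure_mono
      intro y hy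
      simp only [Function.mem_support] at *
      intro h0
      exact hy (show v y * (φ y : ℂ) = 0 by rw [h0]; norm_num)
    exact h1.trans ((Metric.closedBall_subset_ball (by linarith)).trans hball)
  have key := hint u usmooth ucs usupp x hx
  -- compute values of u at x
  have hux : u x = 0 := by simp [hudef, hvx]
  have hpdu : ∀ j, pd u j x = ((Pi.single j 1 : Fin n → ℝ) k : ℂ) := fun j => by
    rw [pd_eq_of_eventuallyEq huv j, pdv]
  have hlapu : lap u x = 0 := by
    rw [lap_congr huv]
    unfold lap
    apply Finset.sum_eq_zero
    intro j _
    have : pd v j = fun _ => ((Pi.single j 1 : Fin n → ℝ) k : ℂ) := funext (pdv j)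
    rw [this]
    simp [pd]
  -- compute lap (G*u) at x
  have hGuv : (fun y => G y * u y) =ᶠ[nhds x] (fun y => G y * v y) := by
    filter_upwards [huv] with y hy
    rw [hy]
  have hpdGv : ∀ j, pd (fun y => G y * v y) j =ᶠ[nhds x]
      fun y => G y * ((Pi.single j 1 : Fin n → ℝ) k : ℂ) + v y * pd G j y := by
    intro j
    filter_upwards [hΩ.mem_nhds hx] with y hy
    rw [pd_mul (hG1 y hy) (hvdiff y) j, pdv]
  have hlapGu : lap (fun y => G y * u y) x =
      2 * pd G k x := by
    rw [lap_congr hGuv]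
    unfold lap
    have hterm : ∀ j : Fin n, pd (pd (fun y => G y * v y) j) j x
        = 2 * pd G j x * ((Pi.single j 1 : Fin n → ℝ) k : ℂ) := by
      intro j
      rw [pd_eq_of_eventuallyEq (hpdGv j) j]
      rw [pd_add ((hG1 x hx).mul_const _) ((hvdiff x).fun_mul (hG2 j x hx)) j]
      rw [pd_mul_const (hG1 x hx) j, pd_mul (hvdiff x) (hG2 j x hx) j, hvx, pdv]
      ring
    rw [Finset.sum_congr rfl fun j _ => hterm j]
    simp [Pi.single_apply, apply_ite, mul_ite, Finset.sum_ite_eq]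
  -- compute magOp A u x
  have hmag : magOp A u x = -(2 * Complex.I * (A x k : ℂ)) := by
    unfold magOp
    rw [hlapu, hux]
    have : (∑ j : Fin n, (A x j : ℂ) * pd u j x) = (A x k : ℂ) := by
      rw [Finset.sum_congr rfl fun j _ => by rw [hpdu j]]
      simp [Pi.single_apply, apply_ite, mul_ite, Finset.sum_ite_eq]
    rw [this]
    ring
  rw [hlapGu, hmag] at key
  have hI := Complex.I_ne_zero
  linear_combination (-1/2 : ℂ) * key
end
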